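/- arXiv:2207.07548 — 7 statements merged into one kernel-verified Lean document; each statement's English description precedes it below -/
import Mathlib

section
/- Let q̂ > 0, let 0 ≤ α̂ < 1, and let β̂ and δ̂ be nonnegative real numbers with α̂ + β̂ ≤ 1 and β̂ + δ̂ < 1. Then there exists a positive constant C, independent of t, such that for all t ∈ (0, ∞), ∫₀ᵗ e^(−q̂(t−τ)) · (t−τ)^(−α̂) · t^δ̂ · τ^(−(β̂+δ̂)) dτ < C. -/
/-!
Split `(0, t)` at `t / 2`. For `τ ≤ t / 2` the factor `e^{-q(t-τ)} (t-τ)^{-α}` is at most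
`e^{-qt/2} (t/2)^{-α}`, and integrating `τ^{-(β+δ)}` leaves `2^α e^{-qt/2} t^{1-α-β} / (1-β-δ)`,
which is bounded since `0 ≤ 1 - α - β ≤ 1`. For `τ ≥ t / 2` we bound `τ^{-(β+δ)}` by
`(t/2)^{-(β+δ)}`, leaving `2^{β+δ} t^{-β} ∫₀ᵗ e^{-qu} u^{-α} du`; the integral is at most
`t^{1-α} / (1-α)`, which handles `t ≤ 1`, and at most the Gamma integral `q^{α-1} Γ(1-α)`,
which handles `t ≥ 1`.
-/

open MeasureTheory Set Real

lemma integrableOn_rpow_neg_Ioo {s : ℝ} (hs : s < 1) (t : ℝ) :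
    IntegrableOn (fun x : ℝ ↦ x ^ (-s)) (Ioo 0 t) :=
  (intervalIntegral.intervalIntegrable_rpow' (by linarith)).1.mono_set Ioo_subset_Ioc_self

lemma setIntegral_rpow_neg_Ioo {s t : ℝ} (hs : s < 1) (ht : 0 ≤ t) :
    ∫ x in Ioo 0 t, x ^ (-s) = t ^ (1 - s) / (1 - s) := by
  rw [← integral_Ioc_eq_integral_Ioo, ← intervalIntegral.integral_of_le ht,
    integral_rpow (Or.inl (by linarith)), Real.zero_rpow (by linarith), sub_zero, neg_add_eq_sub]

lemma integrableOn_comp_sub_left_Ioo {f : ℝ → ℝ} {t : ℝ} (hf : IntegrableOn f (Ioo 0 t)) :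
    IntegrableOn (fun x ↦ f (t - x)) (Ioo 0 t) := by
  have := ((Measure.measurePreserving_sub_left volume t).integrableOn_comp_preimage
    (MeasurableEquiv.subLeft t).measurableEmbedding).2 hf
  simpa [preimage_const_sub_Ioo, Function.comp_def] using this

lemma setIntegral_comp_sub_left_Ioo (f : ℝ → ℝ) (t : ℝ) :
    ∫ x in Ioo 0 t, f (t - x) = ∫ x in Ioo 0 t, f x := by
  have := (Measure.measurePreserving_sub_left volume t).setIntegral_preimage_emb
    (MeasurableEquiv.subLeft t).measurableEmbedding f (Ioo 0 t)
  simpa [preimage_const_sub_Ioo] using this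

section Convolution

variable {φ ψ : ℝ → ℝ} (hφ : AntitoneOn φ (Ioi 0)) (hψ : AntitoneOn ψ (Ioi 0))
  (hφ0 : ∀ u ∈ Ioi 0, 0 ≤ φ u) (hψ0 : ∀ u ∈ Ioi 0, 0 ≤ ψ u)
include hφ hψ hφ0 hψ0

lemma mul_le_add_of_antitoneOn {t τ : ℝ} (hτ : τ ∈ Ioo 0 t) :
    φ (t - τ) * ψ τ ≤ φ (t / 2) * ψ τ + ψ (t / 2) * φ (t - τ) := by
  obtain ⟨hτ0, hτt⟩ := hτ
  have ht2 : t / 2 ∈ Ioi 0 := half_pos (hτ0.trans hτt)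
  have htτ : t - τ ∈ Ioi 0 := sub_pos.2 hτt
  rcases le_total τ (t / 2) with h | h
  · exact le_add_of_le_of_nonneg
      (mul_le_mul_of_nonneg_right (hφ ht2 htτ (by linarith)) (hψ0 τ hτ0))
      (mul_nonneg (hψ0 _ ht2) (hφ0 _ htτ))
  · rw [mul_comm (ψ _)]
    exact le_add_of_nonneg_of_le (mul_nonneg (hφ0 _ ht2) (hψ0 τ hτ0))
      (mul_le_mul_of_nonneg_left (hψ ht2 hτ0 h) (hφ0 _ htτ))

lemma setIntegral_comp_sub_mul_le {t : ℝ} (hφi : IntegrableOn φ (Ioo 0 t))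
    (hψi : IntegrableOn ψ (Ioo 0 t)) :
    ∫ τ in Ioo 0 t, φ (t - τ) * ψ τ ≤
      φ (t / 2) * (∫ τ in Ioo 0 t, ψ τ) + ψ (t / 2) * ∫ u in Ioo 0 t, φ u := by
  have hbound := (hψi.const_mul (φ (t / 2))).add
    ((integrableOn_comp_sub_left_Ioo hφi).const_mul (ψ (t / 2)))
  calc ∫ τ in Ioo 0 t, φ (t - τ) * ψ τ
      ≤ ∫ τ in Ioo 0 t, (φ (t / 2) * ψ τ + ψ (t / 2) * φ (t - τ)) := by
        refine integral_mono_of_nonneg ?_ hbound ?_ <;>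
          refine (ae_restrict_iff' measurableSet_Ioo).2 (.of_forall fun τ hτ ↦ ?_)
        · exact mul_nonneg (hφ0 _ (sub_pos.2 hτ.2)) (hψ0 _ hτ.1)
        · exact mul_le_add_of_antitoneOn hφ hψ hφ0 hψ0 hτ
    _ = φ (t / 2) * (∫ τ in Ioo 0 t, ψ τ) + ψ (t / 2) * ∫ u in Ioo 0 t, φ u := by
        rw [integral_add (hψi.const_mul _) ((integrableOn_comp_sub_left_Ioo hφi).const_mul _),
          integral_const_mul, integral_const_mul, setIntegral_comp_sub_left_Ioo φ t]

end Convolution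

section Kernel

variable {q α : ℝ}

lemma antitoneOn_exp_mul_rpow_neg (hq : 0 ≤ q) (hα : 0 ≤ α) :
    AntitoneOn (fun u : ℝ ↦ exp (-q * u) * u ^ (-α)) (Ioi 0) := fun u hu v _ huv ↦
  mul_le_mul (exp_le_exp.2 (by nlinarith)) (rpow_le_rpow_of_nonpos hu huv (by linarith))
    (rpow_nonneg (le_trans (le_of_lt hu) huv) _) (exp_nonneg _)

lemma integrableOn_exp_mul_rpow_neg_Ioi (hq : 0 < q) (hα : α < 1) :
    IntegrableOn (fun u : ℝ ↦ exp (-q * u) * u ^ (-α)) (Ioi 0) :=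
  (integrableOn_rpow_mul_exp_neg_mul_rpow (s := -α) (by linarith) one_pos hq).congr_fun
    (fun u _ ↦ by simp only [rpow_one, mul_comm]) measurableSet_Ioi

lemma setIntegral_exp_mul_rpow_neg_Ioi (hq : 0 < q) (hα : α < 1) :
    ∫ u in Ioi 0, exp (-q * u) * u ^ (-α) = (1 / q) ^ (1 - α) * Gamma (1 - α) := by
  rw [← integral_rpow_mul_exp_neg_mul_Ioi (by linarith) hq]
  refine setIntegral_congr_fun measurableSet_Ioi fun u _ ↦ ?_
  rw [sub_sub_cancel_left, neg_mul, mul_comm]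

lemma setIntegral_exp_mul_rpow_neg_Ioo_le_rpow (hq : 0 ≤ q) (hα : α < 1) {t : ℝ} (ht : 0 ≤ t) :
    ∫ u in Ioo 0 t, exp (-q * u) * u ^ (-α) ≤ t ^ (1 - α) / (1 - α) := by
  rw [← setIntegral_rpow_neg_Ioo hα ht]
  refine integral_mono_of_nonneg ?_ (integrableOn_rpow_neg_Ioo hα t) ?_ <;>
    refine (ae_restrict_iff' measurableSet_Ioo).2 (.of_forall fun u hu ↦ ?_)
  · exact mul_nonneg (exp_nonneg _) (rpow_nonneg hu.1.le _)
  · exact mul_le_of_le_one_left (rpow_nonneg hu.1.le _)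
      (exp_le_one_iff.2 (by nlinarith [hu.1]))

lemma setIntegral_exp_mul_rpow_neg_Ioo_le_Gamma (hq : 0 < q) (hα : α < 1) (t : ℝ) :
    ∫ u in Ioo 0 t, exp (-q * u) * u ^ (-α) ≤ (1 / q) ^ (1 - α) * Gamma (1 - α) := by
  rw [← setIntegral_exp_mul_rpow_neg_Ioi hq hα]
  refine setIntegral_mono_set (integrableOn_exp_mul_rpow_neg_Ioi hq hα) ?_
    (.of_forall Ioo_subset_Ioi_self)
  exact (ae_restrict_iff' measurableSet_Ioi).2 (.of_forall fun u hu ↦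
    mul_nonneg (exp_nonneg _) (rpow_nonneg (le_of_lt hu) _))

lemma rpow_neg_mul_setIntegral_exp_mul_rpow_neg_Ioo_le {β t : ℝ} (hq : 0 < q) (hα : α < 1)
    (hβ : 0 ≤ β) (hαβ : α + β ≤ 1) (ht : 0 < t) :
    t ^ (-β) * ∫ u in Ioo 0 t, exp (-q * u) * u ^ (-α) ≤
      max (1 / (1 - α)) ((1 / q) ^ (1 - α) * Gamma (1 - α)) := by
  have htβ : 0 ≤ t ^ (-β) := rpow_nonneg ht.le _
  rcases le_total t 1 with ht1 | ht1
  · refine le_max_of_le_left ?_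
    calc t ^ (-β) * ∫ u in Ioo 0 t, exp (-q * u) * u ^ (-α)
        ≤ t ^ (-β) * (t ^ (1 - α) / (1 - α)) :=
          mul_le_mul_of_nonneg_left (setIntegral_exp_mul_rpow_neg_Ioo_le_rpow hq.le hα ht.le) htβ
      _ = t ^ (1 - α - β) / (1 - α) := by
          rw [mul_div_assoc', ← rpow_add ht]; ring_nf
      _ ≤ 1 / (1 - α) :=
          div_le_div_of_nonneg_right (rpow_le_one ht.le ht1 (by linarith)) (by linarith)
  · refine le_max_of_le_right ?_
    calc t ^ (-β) * ∫ u in Ioo 0 t, exp (-q * u) * u ^ (-α)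
        ≤ 1 * ((1 / q) ^ (1 - α) * Gamma (1 - α)) :=
          mul_le_mul (rpow_le_one_of_one_le_of_nonpos ht1 (by linarith))
            (setIntegral_exp_mul_rpow_neg_Ioo_le_Gamma hq hα t)
            (setIntegral_nonneg measurableSet_Ioo fun u hu ↦
              mul_nonneg (exp_nonneg _) (rpow_nonneg hu.1.le _)) zero_le_one
      _ = (1 / q) ^ (1 - α) * Gamma (1 - α) := one_mul _

end Kernel

lemma exp_neg_mul_mul_rpow_le {q p t : ℝ} (hq : 0 < q) (hp0 : 0 ≤ p) (hp1 : p ≤ 1) (ht : 0 ≤ t) :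
    exp (-q * t) * t ^ p ≤ 1 + 1 / q := by
  have hexp : exp (-q * t) ≤ 1 := exp_le_one_iff.2 (by nlinarith)
  have hlin : t * exp (-q * t) ≤ 1 / q := by
    rw [neg_mul, exp_neg, ← div_eq_mul_inv, div_le_div_iff₀ (exp_pos _) hq]
    nlinarith [add_one_le_exp (q * t)]
  have htp : t ^ p ≤ 1 + t := by
    rcases le_total t 1 with ht1 | ht1
    · linarith [rpow_le_one ht ht1 hp0]
    · linarith [rpow_le_self_of_one_le ht1 hp1]
  nlinarith [exp_nonneg (-q * t), rpow_nonneg ht p]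

lemma div_two_rpow_neg {t : ℝ} (ht : 0 ≤ t) (s : ℝ) : (t / 2) ^ (-s) = 2 ^ s * t ^ (-s) := by
  rw [div_rpow ht zero_le_two, rpow_neg zero_le_two, div_inv_eq_mul, mul_comm]

/-- For `q̂ > 0`, `0 ≤ α̂ < 1`, `β̂, δ̂ ≥ 0` with `α̂ + β̂ ≤ 1` and `β̂ + δ̂ < 1`,
there is a constant `C > 0`, independent of `t`, with
`∫₀ᵗ e^(−q̂(t−τ)) (t−τ)^(−α̂) t^δ̂ τ^(−(β̂+δ̂)) dτ < C` for all `t ∈ (0, ∞)`. -/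
theorem stmt1 (q α β δ : ℝ) (hq : 0 < q) (hα0 : 0 ≤ α) (hα1 : α < 1)
    (hβ : 0 ≤ β) (hδ : 0 ≤ δ) (hαβ : α + β ≤ 1) (hβδ : β + δ < 1) :
    ∃ C : ℝ, 0 < C ∧ ∀ t : ℝ, 0 < t →
      (∫ τ in Set.Ioo (0 : ℝ) t,
          Real.exp (-q * (t - τ)) * (t - τ) ^ (-α) * t ^ δ * τ ^ (-(β + δ))) < C := by
  set J : ℝ → ℝ := fun t ↦ ∫ u in Ioo 0 t, exp (-q * u) * u ^ (-α)
  set M := max (1 / (1 - α)) ((1 / q) ^ (1 - α) * Gamma (1 - α))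
  set C₀ := 2 ^ α / (1 - (β + δ)) * (1 + 1 / (q / 2)) + 2 ^ (β + δ) * M
  have h2α : 0 ≤ 2 ^ α / (1 - (β + δ)) := div_nonneg (by positivity) (by linarith)
  have hC₀ : 0 ≤ C₀ := by positivity
  refine ⟨C₀ + 1, by linarith, fun t ht ↦ ?_⟩
  have hconv := setIntegral_comp_sub_mul_le (antitoneOn_exp_mul_rpow_neg hq.le hα0)
    (fun u hu v _ huv ↦ rpow_le_rpow_of_nonpos hu huv (by linarith : -(β + δ) ≤ 0))
    (fun u hu ↦ mul_nonneg (exp_nonneg _) (rpow_nonneg (le_of_lt hu) _))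
    (fun u hu ↦ rpow_nonneg (le_of_lt hu) _)
    ((integrableOn_exp_mul_rpow_neg_Ioi hq hα1).mono_set Ioo_subset_Ioi_self)
    (integrableOn_rpow_neg_Ioo hβδ t)
  rw [setIntegral_rpow_neg_Ioo hβδ ht.le] at hconv
  have hpow₁ : t ^ (1 - α - β) = t ^ δ * t ^ (-α) * t ^ (1 - (β + δ)) := by
    rw [← rpow_add ht, ← rpow_add ht]; ring_nf
  have hpow₂ : t ^ (-β) = t ^ δ * t ^ (-(β + δ)) := by
    rw [← rpow_add ht]; ring_nf
  calc (∫ τ in Ioo 0 t, exp (-q * (t - τ)) * (t - τ) ^ (-α) * t ^ δ * τ ^ (-(β + δ)))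
      = t ^ δ * ∫ τ in Ioo 0 t, exp (-q * (t - τ)) * (t - τ) ^ (-α) * τ ^ (-(β + δ)) := by
        rw [← integral_const_mul]; congr 1; funext τ; ring
    _ ≤ t ^ δ * (exp (-q * (t / 2)) * (t / 2) ^ (-α) * (t ^ (1 - (β + δ)) / (1 - (β + δ)))
          + (t / 2) ^ (-(β + δ)) * J t) :=
        mul_le_mul_of_nonneg_left hconv (rpow_nonneg ht.le _)
    _ = 2 ^ α / (1 - (β + δ)) * (exp (-(q / 2) * t) * t ^ (1 - α - β))
          + 2 ^ (β + δ) * (t ^ (-β) * J t) := by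
        rw [hpow₁, hpow₂, div_two_rpow_neg ht.le, div_two_rpow_neg ht.le,
          show -q * (t / 2) = -(q / 2) * t by ring]
        ring
    _ ≤ C₀ := add_le_add
        (mul_le_mul_of_nonneg_left
          (exp_neg_mul_mul_rpow_le (half_pos hq) (by linarith) (by linarith) ht.le) h2α)
        (mul_le_mul_of_nonneg_left
          (rpow_neg_mul_setIntegral_exp_mul_rpow_neg_Ioo_le hq hα1 hβ hαβ ht) (by positivity))
    _ < C₀ + 1 := lt_add_one _
end

section
/- Let σ > 0. Then there exists a constant C > 0, independent of t (but which may depend on σ), such that for all t > 0: (i) Σ_{k∈ℤ} e^(−2t|k|^σ) ≤ 1 + C e^(−t) (1 + t^(−1/σ)), and (ii) Σ_{k∈ℤ, k≠0} e^(−2t|k|^σ) ≤ C e^(−t) (1 + t^(−1/σ)). -/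
/-! For `k ≠ 0` we have `|k|^σ ≥ 1`, so `e^{-2t|k|^σ} ≤ e^{-t} e^{-t|k|^σ}`, and by the integral
test `∑_{n ≥ 1} e^{-t n^σ} ≤ ∫_0^∞ e^{-t x^σ} dx = t^{-1/σ} Γ(1 + 1/σ)`. Summing over both signs
of `k`, one may take `C = 2 Γ(1 + 1/σ)`. -/

open Real MeasureTheory Set

section EvenIntSum

variable {α : Type*} [AddCommGroup α] [TopologicalSpace α] [IsTopologicalAddGroup α]
  {f : ℤ → α} {a : α}

theorem Function.Even.hasSum_int (hf : f.Even) (h : HasSum (fun n : ℕ => f (n + 1)) a) :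
    HasSum f (f 0 + 2 • a) := by
  have h' : HasSum (fun n : ℕ => f (-(n + 1))) a := by
    convert h using 2
    exact hf _
  convert h.of_add_one_of_neg_add_one h' using 1
  abel

theorem Function.Even.hasSum_int_ne_zero (hf : f.Even)
    (h : HasSum (fun n : ℕ => f (n + 1)) a) :
    HasSum (fun k : {k : ℤ // k ≠ 0} => f k) (2 • a) :=
  (hasSum_singleton 0 f).hasSum_compl_iff.2 (hf.hasSum_int h)

end EvenIntSum

section ExpNegMulRpow

variable {p b : ℝ}

lemma antitoneOn_exp_neg_mul_rpow (hp : 0 < p) (hb : 0 < b) :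
    AntitoneOn (fun x : ℝ => exp (-b * x ^ p)) (Ici 0) := fun x hx _ _ hxy =>
  exp_le_exp.2 <| by nlinarith [rpow_le_rpow hx hxy hp.le]

lemma integrableOn_exp_neg_mul_rpow (hp : 0 < p) (hb : 0 < b) :
    IntegrableOn (fun x : ℝ => exp (-b * x ^ p)) (Ioi 0) :=
  (integrableOn_rpow_mul_exp_neg_mul_rpow (s := 0) neg_one_lt_zero hp hb).congr_fun
    (fun x _ => by simp) measurableSet_Ioi

lemma summable_exp_neg_mul_rpow_succ (hp : 0 < p) (hb : 0 < b) :
    Summable fun n : ℕ => exp (-b * ((n : ℝ) + 1) ^ p) := by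
  have := (antitoneOn_exp_neg_mul_rpow hp hb).summable_of_integrableOn_Ioi_zero
    (integrableOn_exp_neg_mul_rpow hp hb) fun _ _ => (exp_pos _).le
  exact_mod_cast (summable_nat_add_iff 1).2 this

lemma tsum_exp_neg_mul_rpow_succ_le (hp : 0 < p) (hb : 0 < b) :
    ∑' n : ℕ, exp (-b * ((n : ℝ) + 1) ^ p) ≤ b ^ (-1 / p) * Gamma (1 / p + 1) := by
  rw [← integral_exp_neg_mul_rpow hp hb]
  exact_mod_cast (antitoneOn_exp_neg_mul_rpow hp hb).tsum_add_one_le_integral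
    (integrableOn_exp_neg_mul_rpow hp hb) fun _ _ => (exp_pos _).le

lemma exp_neg_two_mul_le_exp_neg_mul_exp_neg_mul {y : ℝ} (hb : 0 ≤ b) (hy : 1 ≤ y) :
    exp (-2 * b * y) ≤ exp (-b) * exp (-b * y) := by
  rw [← exp_add]
  exact exp_le_exp.2 (by nlinarith)

lemma exp_neg_two_mul_rpow_succ_le (hp : 0 < p) (hb : 0 ≤ b) (n : ℕ) :
    exp (-2 * b * ((n : ℝ) + 1) ^ p) ≤ exp (-b) * exp (-b * ((n : ℝ) + 1) ^ p) :=
  exp_neg_two_mul_le_exp_neg_mul_exp_neg_mul hb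
    (one_le_rpow (le_add_of_nonneg_left n.cast_nonneg) hp.le)

lemma summable_exp_neg_two_mul_rpow_succ (hp : 0 < p) (hb : 0 < b) :
    Summable fun n : ℕ => exp (-2 * b * ((n : ℝ) + 1) ^ p) :=
  .of_nonneg_of_le (fun _ => (exp_pos _).le) (exp_neg_two_mul_rpow_succ_le hp hb.le)
    ((summable_exp_neg_mul_rpow_succ hp hb).mul_left _)

lemma tsum_exp_neg_two_mul_rpow_succ_le (hp : 0 < p) (hb : 0 < b) :
    ∑' n : ℕ, exp (-2 * b * ((n : ℝ) + 1) ^ p) ≤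
      exp (-b) * (b ^ (-1 / p) * Gamma (1 / p + 1)) :=
  calc ∑' n : ℕ, exp (-2 * b * ((n : ℝ) + 1) ^ p)
      ≤ ∑' n : ℕ, exp (-b) * exp (-b * ((n : ℝ) + 1) ^ p) :=
        (summable_exp_neg_two_mul_rpow_succ hp hb).tsum_le_tsum
          (exp_neg_two_mul_rpow_succ_le hp hb.le)
          ((summable_exp_neg_mul_rpow_succ hp hb).mul_left _)
    _ = exp (-b) * ∑' n : ℕ, exp (-b * ((n : ℝ) + 1) ^ p) := tsum_mul_left
    _ ≤ exp (-b) * (b ^ (-1 / p) * Gamma (1 / p + 1)) := by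
        gcongr
        exact tsum_exp_neg_mul_rpow_succ_le hp hb

end ExpNegMulRpow

/-- For `σ > 0` there is `C > 0`, independent of `t`, such that for all `t > 0`:
(i) `Σ_{k∈ℤ} e^(−2t|k|^σ) ≤ 1 + C e^(−t)(1 + t^(−1/σ))`, and
(ii) `Σ_{k∈ℤ, k≠0} e^(−2t|k|^σ) ≤ C e^(−t)(1 + t^(−1/σ))`. -/
theorem stmt3 (σ : ℝ) (hσ : 0 < σ) :
    ∃ C : ℝ, 0 < C ∧ ∀ t : ℝ, 0 < t →
      (∑' k : ℤ, Real.exp (-2 * t * (|k| : ℝ) ^ σ)) ≤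
          1 + C * Real.exp (-t) * (1 + t ^ (-(1 / σ))) ∧
      (∑' k : {k : ℤ // k ≠ 0}, Real.exp (-2 * t * (|(k : ℤ)| : ℝ) ^ σ)) ≤
          C * Real.exp (-t) * (1 + t ^ (-(1 / σ))) := by
  have hΓ : 0 < Gamma (1 / σ + 1) := Gamma_pos_of_pos (by positivity)
  refine ⟨2 * Gamma (1 / σ + 1), by positivity, fun t ht => ?_⟩
  set f : ℤ → ℝ := fun k => exp (-2 * t * (|k| : ℝ) ^ σ)
  have hf : f.Even := fun k => by simp [f]
  have h0 : f 0 = 1 := by simp [f, zero_rpow hσ.ne']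
  have htail :
      HasSum (fun n : ℕ => f (n + 1)) (∑' n : ℕ, exp (-2 * t * ((n : ℝ) + 1) ^ σ)) := by
    convert (summable_exp_neg_two_mul_rpow_succ hσ ht).hasSum using 3 with n
    simp only [Int.cast_add, Int.cast_natCast, Int.cast_one]
    rw [abs_of_nonneg (by positivity)]
  have hbound : 2 • ∑' n : ℕ, exp (-2 * t * ((n : ℝ) + 1) ^ σ) ≤
      2 * Gamma (1 / σ + 1) * exp (-t) * (1 + t ^ (-(1 / σ))) := by
    have := tsum_exp_neg_two_mul_rpow_succ_le hσ ht
    rw [neg_div] at this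
    rw [two_nsmul]
    nlinarith [rpow_nonneg ht.le (-(1 / σ)), exp_pos (-t)]
  rw [(hf.hasSum_int htail).tsum_eq, (hf.hasSum_int_ne_zero htail).tsum_eq, h0]
  exact ⟨by linarith, hbound⟩
end

section
/- Let σ > 0 and s > 0. There exists a constant C > 0 independent of t such that for every f ∈ L¹(𝕊) and every t > 0, ‖e^(−tL) f‖_{Ḣ^s} ≤ C e^(−t/4) (1 + t^(−(2s+1)/(2σ))) ‖f‖_{L¹}. -/
/-!
Since `|ĝ(k)| ≤ e^{-t|k|^σ} ‖f‖₁ / 2π`, the square of `‖g‖_{Ḣ^s}` is at most `(‖f‖₁ / 2π)²` times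
the lattice sum `Σ_k |k|^{2s} e^{-2t|k|^σ}`. For `k ≠ 0` we have `|k|^σ ≥ 1`, so half of the
exponent yields the factor `e^{-t}`; the remaining sum is bounded by comparing
`n^p e^{-τ n^σ}` with `x^p e^{-τ (x/2)^σ}` on `[n, n + 1]`, which integrates to a multiple of
`τ^{-(p+1)/σ}` (a Gamma integral).
-/

open MeasureTheory
open scoped ENNReal

noncomputable section

instance : Fact (0 < 2 * Real.pi) := ⟨by positivity⟩

/-- The Fourier multiplier symbol `e^(−s|k|^σ − i s ω_av sgn k)` of the semigroup `e^(−sL)`. -/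
def heatMul (σ ωav s : ℝ) (k : ℤ) : ℂ :=
  Complex.exp (Complex.ofReal (-(s * (|k| : ℝ) ^ σ)) -
    Complex.I * Complex.ofReal (ωav * s * (Int.sign k : ℝ)))

/-- The homogeneous Sobolev norm `‖f‖_{Ḣ^s} = (Σ_{k∈ℤ} |k|^(2s) |f̂(k)|²)^(1/2)` of a
function on the circle, valued in `ℝ≥0∞`. -/
def hSobNorm (s : ℝ) (f : AddCircle (2 * Real.pi) → ℂ) : ℝ≥0∞ :=
  (∑' k : ℤ, ENNReal.ofReal ((|k| : ℝ) ^ (2 * s) * ‖fourierCoeff f k‖ ^ 2)) ^ ((1 : ℝ) / 2)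

open Real Set

section FourierCoeff

variable {T : ℝ} [Fact (0 < T)] {E : Type*} [NormedAddCommGroup E] [NormedSpace ℂ E]

lemma norm_fourierCoeff_le (f : AddCircle T → E) (n : ℤ) :
    ‖fourierCoeff f n‖ ≤ T⁻¹ * ∫ x, ‖f x‖ := by
  calc ‖fourierCoeff f n‖ ≤ ∫ x, ‖fourier (-n) x • f x‖ ∂AddCircle.haarAddCircle :=
        norm_integral_le_integral_norm _
    _ = ∫ x, ‖f x‖ ∂AddCircle.haarAddCircle := by simp [norm_smul, Circle.norm_coe]
    _ = T⁻¹ * ∫ x, ‖f x‖ := AddCircle.integral_haarAddCircle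

end FourierCoeff

section LatticeSum

variable {σ p u : ℝ}

lemma rpow_mul_exp_neg_le_of_mem_Icc (hσ : 0 ≤ σ) (hp : 0 ≤ p) (hu : 0 ≤ u) {m x : ℝ} (hm : 1 ≤ m)
    (hx : x ∈ Icc m (m + 1)) :
    m ^ p * exp (-(u * m ^ σ)) ≤ x ^ p * exp (-(u / 2 ^ σ) * x ^ σ) := by
  obtain ⟨hmx, hxm⟩ := hx
  have hx0 : 0 ≤ x := by linarith
  have hscale : u / 2 ^ σ * x ^ σ = u * (x / 2) ^ σ := by
    rw [div_rpow hx0 zero_le_two]; ring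
  gcongr
  rw [neg_mul, hscale, neg_le_neg_iff]
  gcongr
  linarith

lemma sum_range_rpow_mul_exp_neg_le_integral (hσ : 0 < σ) (hp : 0 ≤ p) (hu : 0 < u) (N : ℕ) :
    ∑ n ∈ Finset.range N, ((n : ℝ) + 1) ^ p * exp (-(u * ((n : ℝ) + 1) ^ σ)) ≤
      ∫ x in Ioi 0, x ^ p * exp (-(u / 2 ^ σ) * x ^ σ) := by
  set ψ : ℝ → ℝ := fun x => x ^ p * exp (-(u / 2 ^ σ) * x ^ σ)
  have hψ : IntegrableOn ψ (Ioi 0) :=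
    integrableOn_rpow_mul_exp_neg_mul_rpow (by linarith) hσ (by positivity)
  have hψ_interval {a b : ℝ} (ha : 0 ≤ a) (hb : 0 ≤ b) : IntervalIntegrable ψ volume a b :=
    ⟨hψ.mono_set (Ioc_subset_Ioi_self.trans (Ioi_subset_Ioi ha)),
      hψ.mono_set (Ioc_subset_Ioi_self.trans (Ioi_subset_Ioi hb))⟩
  calc ∑ n ∈ Finset.range N, ((n : ℝ) + 1) ^ p * exp (-(u * ((n : ℝ) + 1) ^ σ))
      ≤ ∑ n ∈ Finset.range N, ∫ x in ((n : ℝ) + 1)..((n + 1 : ℕ) : ℝ) + 1, ψ x := by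
        refine Finset.sum_le_sum fun n _ => ?_
        have hn : ((n + 1 : ℕ) : ℝ) + 1 = (n + 1) + 1 := by push_cast; ring
        rw [hn]
        have hle := intervalIntegral.integral_mono_on (by linarith) intervalIntegrable_const
          (hψ_interval (by positivity) (by positivity))
          fun x hx => rpow_mul_exp_neg_le_of_mem_Icc hσ.le hp hu.le (m := (n : ℝ) + 1)
            (by linarith [n.cast_nonneg (α := ℝ)]) hx
        simpa using hle
    _ = ∫ x in (1 : ℝ)..(N : ℝ) + 1, ψ x := by
        rw [intervalIntegral.sum_integral_adjacent_intervals (a := fun n : ℕ => (n : ℝ) + 1)]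
        · simp
        · intro n _; exact hψ_interval (by positivity) (by positivity)
    _ = ∫ x in Ioc 1 ((N : ℝ) + 1), ψ x :=
        intervalIntegral.integral_of_le (by linarith [N.cast_nonneg (α := ℝ)])
    _ ≤ ∫ x in Ioi 0, ψ x :=
        setIntegral_mono_set hψ ((ae_restrict_iff' measurableSet_Ioi).mpr
          (Filter.Eventually.of_forall fun x hx =>
            mul_nonneg (rpow_nonneg (le_of_lt hx) _) (exp_pos _).le))
          (Ioc_subset_Ioi_self.trans (Ioi_subset_Ioi zero_le_one)).eventuallyLE

lemma summable_and_tsum_rpow_mul_exp_neg_le (hσ : 0 < σ) (hp : 0 ≤ p) (hu : 0 < u) :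
    Summable (fun n : ℕ => ((n : ℝ) + 1) ^ p * exp (-(u * ((n : ℝ) + 1) ^ σ))) ∧
      ∑' n : ℕ, ((n : ℝ) + 1) ^ p * exp (-(u * ((n : ℝ) + 1) ^ σ)) ≤
        (u / 2 ^ σ) ^ (-(p + 1) / σ) * (1 / σ) * Gamma ((p + 1) / σ) := by
  have hpartial := sum_range_rpow_mul_exp_neg_le_integral hσ hp hu
  rw [integral_rpow_mul_exp_neg_mul_rpow hσ (by linarith) (by positivity)] at hpartial
  have hnonneg (n : ℕ) : 0 ≤ ((n : ℝ) + 1) ^ p * exp (-(u * ((n : ℝ) + 1) ^ σ)) := by positivity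
  exact ⟨summable_of_sum_range_le hnonneg hpartial, Real.tsum_le_of_sum_range_le hnonneg hpartial⟩

lemma exists_tsum_int_rpow_mul_exp_neg_le (hσ : 0 < σ) (hp : 0 < p) :
    ∃ A > 0, ∀ τ > 0,
      Summable (fun k : ℤ => |(k : ℝ)| ^ p * exp (-(τ * |(k : ℝ)| ^ σ))) ∧
      ∑' k : ℤ, |(k : ℝ)| ^ p * exp (-(τ * |(k : ℝ)| ^ σ)) ≤
        A * exp (-τ / 2) * τ ^ (-(p + 1) / σ) := by
  refine ⟨2 * (2 ^ (σ + 1)) ^ ((p + 1) / σ) * ((1 / σ) * Gamma ((p + 1) / σ)),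
    by have := Gamma_pos_of_pos (show 0 < (p + 1) / σ by positivity); positivity,
    fun τ hτ => ?_⟩
  set F : ℤ → ℝ := fun k => |(k : ℝ)| ^ p * exp (-(τ * |(k : ℝ)| ^ σ))
  set G : ℕ → ℝ := fun n => ((n : ℝ) + 1) ^ p * exp (-(τ / 2 * ((n : ℝ) + 1) ^ σ))
  have hF_succ (n : ℕ) : F (n + 1) = ((n : ℝ) + 1) ^ p * exp (-(τ * ((n : ℝ) + 1) ^ σ)) := by
    simp only [F]; push_cast; rw [abs_of_nonneg (by positivity)]
  have hF_neg_succ (n : ℕ) : F (-(n + 1)) = F (n + 1) := by simp only [F]; push_cast; rw [abs_neg]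
  have hF_zero : F 0 = 0 := by simp [F, zero_rpow hp.ne']
  have hFG (n : ℕ) : F (n + 1) ≤ exp (-τ / 2) * G n := by
    have h1 : (1 : ℝ) ≤ ((n : ℝ) + 1) ^ σ :=
      one_le_rpow (by linarith [n.cast_nonneg (α := ℝ)]) hσ.le
    rw [hF_succ, mul_left_comm, ← exp_add]
    gcongr
    nlinarith
  obtain ⟨hG, hG_le⟩ := summable_and_tsum_rpow_mul_exp_neg_le hσ hp.le (half_pos hτ)
  have hF_succ_summable : Summable fun n : ℕ => F (n + 1) :=
    Summable.of_nonneg_of_le (fun n => by positivity) hFG (hG.mul_left _)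
  have hF_neg_summable : Summable fun n : ℕ => F (-(n + 1)) := by
    simpa only [hF_neg_succ] using hF_succ_summable
  refine ⟨hF_succ_summable.of_add_one_of_neg_add_one hF_neg_summable, ?_⟩
  rw [tsum_of_add_one_of_neg_add_one hF_succ_summable hF_neg_summable]
  simp only [hF_neg_succ, hF_zero, add_zero]
  have hscale : (τ / 2 / 2 ^ σ) ^ (-(p + 1) / σ) =
      (2 ^ (σ + 1)) ^ ((p + 1) / σ) * τ ^ (-(p + 1) / σ) := by
    have hτ' : τ / 2 / 2 ^ σ = τ / 2 ^ (σ + 1) := by rw [rpow_add_one two_ne_zero]; ring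
    rw [hτ', div_rpow hτ.le (by positivity), neg_div, rpow_neg (x := 2 ^ (σ + 1)) (by positivity),
      div_inv_eq_mul, mul_comm]
  calc ∑' n : ℕ, F (n + 1) + ∑' n : ℕ, F (n + 1)
      = 2 * ∑' n : ℕ, F (n + 1) := (two_mul _).symm
    _ ≤ 2 * ∑' n, exp (-τ / 2) * G n :=
        mul_le_mul_of_nonneg_left (hF_succ_summable.tsum_le_tsum hFG (hG.mul_left _)) zero_le_two
    _ = 2 * (exp (-τ / 2) * ∑' n, G n) := by rw [tsum_mul_left]
    _ ≤ 2 * (exp (-τ / 2) *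
          ((τ / 2 / 2 ^ σ) ^ (-(p + 1) / σ) * (1 / σ) * Gamma ((p + 1) / σ))) := by
        gcongr
    _ = _ := by rw [hscale]; ring

end LatticeSum

lemma norm_heatMul (σ ωav t : ℝ) (k : ℤ) :
    ‖heatMul σ ωav t k‖ = exp (-(t * |(k : ℝ)| ^ σ)) := by
  rw [heatMul, Complex.norm_exp]
  simp

lemma norm_fourierCoeff_le_of_heat {σ ωav t : ℝ} {f g : AddCircle (2 * π) → ℂ}
    (hg : ∀ k : ℤ, fourierCoeff g k = heatMul σ ωav t k * fourierCoeff f k) (k : ℤ) :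
    ‖fourierCoeff g k‖ ≤ exp (-(t * |(k : ℝ)| ^ σ)) * ((2 * π)⁻¹ * ∫ x, ‖f x‖) := by
  rw [hg, norm_mul, norm_heatMul]
  gcongr
  exact norm_fourierCoeff_le f k

lemma hSobNorm_le_ofReal {s B : ℝ} {g : AddCircle (2 * π) → ℂ} {w : ℤ → ℝ} (hB : 0 ≤ B)
    (hw : Summable w) (hgw : ∀ k : ℤ, |(k : ℝ)| ^ (2 * s) * ‖fourierCoeff g k‖ ^ 2 ≤ w k)
    (hwB : ∑' k, w k ≤ B ^ 2) : hSobNorm s g ≤ ENNReal.ofReal B := by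
  have hw_nonneg (k : ℤ) : 0 ≤ w k := le_trans (by positivity) (hgw k)
  calc hSobNorm s g ≤ ENNReal.ofReal (B ^ 2) ^ ((1 : ℝ) / 2) := by
        unfold hSobNorm
        gcongr
        calc ∑' k : ℤ, ENNReal.ofReal (|(k : ℝ)| ^ (2 * s) * ‖fourierCoeff g k‖ ^ 2)
            ≤ ∑' k, ENNReal.ofReal (w k) :=
              ENNReal.tsum_le_tsum fun k => ENNReal.ofReal_le_ofReal (hgw k)
          _ = ENNReal.ofReal (∑' k, w k) := (ENNReal.ofReal_tsum_of_nonneg hw_nonneg hw).symm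
          _ ≤ ENNReal.ofReal (B ^ 2) := ENNReal.ofReal_le_ofReal hwB
    _ = ENNReal.ofReal B := by
        rw [ENNReal.ofReal_rpow_of_nonneg (sq_nonneg B) (by norm_num), ← sqrt_eq_rpow, sqrt_sq hB]

lemma exists_hSobNorm_heat_le {σ s : ℝ} (ωav : ℝ) (hσ : 0 < σ) (hs : 0 < s) :
    ∃ C > 0, ∀ (f g : AddCircle (2 * π) → ℂ) (t : ℝ), 0 < t →
      (∀ k : ℤ, fourierCoeff g k = heatMul σ ωav t k * fourierCoeff f k) →
      hSobNorm s g ≤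
        ENNReal.ofReal (C * exp (-t / 2) * (2 * t) ^ (-((2 * s + 1) / (2 * σ))) * ∫ x, ‖f x‖) := by
  obtain ⟨A, hA, hlattice⟩ := exists_tsum_int_rpow_mul_exp_neg_le hσ (by positivity : 0 < 2 * s)
  refine ⟨√A * (2 * π)⁻¹, by positivity, fun f g t ht hg => ?_⟩
  obtain ⟨hsum, hsum_le⟩ := hlattice (2 * t) (by positivity)
  set M := (2 * π)⁻¹ * ∫ x, ‖f x‖
  set a := (2 * s + 1) / (2 * σ)
  have hM : 0 ≤ M := mul_nonneg (by positivity) (integral_nonneg fun x => norm_nonneg _)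
  have hsq : A * exp (-(2 * t) / 2) * (2 * t) ^ (-(2 * s + 1) / σ) * M ^ 2 =
      (√A * exp (-t / 2) * (2 * t) ^ (-a) * M) ^ 2 := by
    have hexp : exp (-(2 * t) / 2) = exp (-t / 2) ^ 2 := by
      rw [← exp_nat_mul]; push_cast; ring_nf
    have hpow : (2 * t) ^ (-(2 * s + 1) / σ) = ((2 * t) ^ (-a)) ^ 2 := by
      rw [← rpow_mul_natCast (by positivity)]; congr 1; simp only [a]; field_simp; ring
    rw [hexp, hpow]
    nth_rw 1 [← sq_sqrt hA.le]
    ring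
  convert hSobNorm_le_ofReal (B := √A * exp (-t / 2) * (2 * t) ^ (-a) * M) (by positivity)
    (hsum.mul_right (M ^ 2)) (fun k => ?_) ?_ using 2
  · ring
  · calc |(k : ℝ)| ^ (2 * s) * ‖fourierCoeff g k‖ ^ 2
        ≤ |(k : ℝ)| ^ (2 * s) * (exp (-(t * |(k : ℝ)| ^ σ)) * M) ^ 2 := by
          gcongr
          exact norm_fourierCoeff_le_of_heat hg k
      _ = |(k : ℝ)| ^ (2 * s) * exp (-(2 * t * |(k : ℝ)| ^ σ)) * M ^ 2 := by
          rw [mul_pow, ← exp_nat_mul]; ring_nf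
  · rw [tsum_mul_right, ← hsq]
    gcongr

/-- For `σ > 0` and `s > 0` there is `C > 0`, independent of `t`, such that for every
`f ∈ L¹(𝕊)` and every `t > 0`, the function `g = e^(−tL) f` (characterized by its Fourier
coefficients `ĝ(k) = e^(−t|k|^σ − i t ω_av sgn k) f̂(k)`) satisfies
`‖g‖_{Ḣ^s} ≤ C e^(−t/4)(1 + t^(−(2s+1)/(2σ))) ‖f‖_{L¹}`. -/
theorem stmt5 (σ ωav s : ℝ) (hσ : 0 < σ) (hs : 0 < s) :
    ∃ C : ℝ, 0 < C ∧
      ∀ (f g : AddCircle (2 * Real.pi) → ℂ) (t : ℝ), 0 < t →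
        Integrable f volume →
        (∀ k : ℤ, fourierCoeff g k = heatMul σ ωav t k * fourierCoeff f k) →
        hSobNorm s g ≤
          ENNReal.ofReal (C * Real.exp (-t / 4) * (1 + t ^ (-((2 * s + 1) / (2 * σ))))) *
            eLpNorm f 1 volume := by
  obtain ⟨C, hC, hheat⟩ := exists_hSobNorm_heat_le ωav hσ hs
  refine ⟨C, hC, fun f g t ht hf hg => (hheat f g t ht hg).trans ?_⟩
  set a := (2 * s + 1) / (2 * σ)
  have hexp : exp (-t / 2) ≤ exp (-t / 4) := exp_le_exp.mpr (by linarith)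
  have hpow : (2 * t) ^ (-a) ≤ 1 + t ^ (-a) :=
    (rpow_le_rpow_of_nonpos ht (by linarith) (neg_nonpos.mpr (by positivity))).trans
      (le_add_of_nonneg_left zero_le_one)
  rw [eLpNorm_one_eq_lintegral_enorm, ← ofReal_integral_norm_eq_lintegral_enorm hf,
    ← ENNReal.ofReal_mul (by positivity)]
  have hI : 0 ≤ ∫ x, ‖f x‖ := integral_nonneg fun x => norm_nonneg _
  gcongr
end
end

section
/- Let s > 1/2 and m ∈ [0, s]. There exists a constant c > 0 such that for all periodic functions f and g on [−π, π] with zero mean, if ‖f‖_{Ḣ^m} < ∞ and ‖g‖_{Ḣ^s} < ∞, then the product fg satisfies ‖fg‖_{Ḣ^m} ≤ c ‖f‖_{Ḣ^m} ‖g‖_{Ḣ^s}. -/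
open MeasureTheory
open scoped ENNReal

noncomputable section

/-!
Since `2s > 1`, Cauchy–Schwarz against `Σ_{k ≠ 0} |k|^{-2s} < ∞` puts `ĝ` in `ℓ¹`, so
`(fg)^(k) = Σ_j ĝ(j) f̂(k - j)`; this identity needs uniqueness of Fourier coefficients of
integrable functions, which comes from testing against continuous functions (trigonometric
polynomials are dense) and then against continuous approximations of indicators of closed sets.
For `k - j ≠ 0` the weight splits as `|k|^m ≤ 2^m (|k - j|^m + |j|^s |k - j|^{m-s})`. The first
part is a convolution of `|ĝ| ∈ ℓ¹` with `|l|^m |f̂(l)| ∈ ℓ²`, the second one of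
`|j|^s |ĝ(j)| ∈ ℓ²` with `|l|^{m-s} |f̂(l)| ∈ ℓ¹` (Cauchy–Schwarz again, as `f̂(0) = 0`), and
Young's inequality `‖a ⋆ b‖₂ ≤ ‖a‖₁ ‖b‖₂` bounds both.
-/

open AddCircle Filter Topology BoundedContinuousFunction HasOuterApproxClosed
open scoped NNReal

def l2ENorm {ι : Type*} (a : ι → ℝ≥0∞) : ℝ≥0∞ := (∑' i, a i ^ 2) ^ (1 / 2 : ℝ)

section l2ENorm

variable {ι : Type*}

lemma l2ENorm_eq_eLpNorm [MeasurableSpace ι] [MeasurableSingletonClass ι] (a : ι → ℝ≥0∞) :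
    l2ENorm a = eLpNorm a 2 Measure.count := by
  simp [l2ENorm, eLpNorm_eq_lintegral_rpow_enorm_toReal two_ne_zero ENNReal.ofNat_ne_top,
    lintegral_count]

lemma l2ENorm_add_le (a b : ι → ℝ≥0∞) : l2ENorm (a + b) ≤ l2ENorm a + l2ENorm b := by
  let _ : MeasurableSpace ι := ⊤
  simp only [l2ENorm_eq_eLpNorm]
  exact eLpNorm_add_le measurable_from_top.aestronglyMeasurable
    measurable_from_top.aestronglyMeasurable one_le_two

lemma l2ENorm_mono {a b : ι → ℝ≥0∞} (h : a ≤ b) : l2ENorm a ≤ l2ENorm b := by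
  unfold l2ENorm
  gcongr with i
  exact h i

lemma l2ENorm_const_mul (c : ℝ≥0∞) (a : ι → ℝ≥0∞) :
    l2ENorm (fun i => c * a i) = c * l2ENorm a := by
  simp only [l2ENorm, mul_pow, ENNReal.tsum_mul_left]
  rw [ENNReal.mul_rpow_of_nonneg _ _ (by norm_num), ← ENNReal.rpow_two, ← ENNReal.rpow_mul]
  norm_num

lemma apply_le_l2ENorm (a : ι → ℝ≥0∞) (i : ι) : a i ≤ l2ENorm a := by
  calc a i = (a i ^ 2) ^ (1 / 2 : ℝ) := by
        rw [← ENNReal.rpow_two, ← ENNReal.rpow_mul]; norm_num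
    _ ≤ l2ENorm a := by unfold l2ENorm; gcongr; exact ENNReal.le_tsum i

lemma l2ENorm_sq (a : ι → ℝ≥0∞) : l2ENorm a ^ 2 = ∑' i, a i ^ 2 := by
  rw [l2ENorm, ← ENNReal.rpow_natCast, ← ENNReal.rpow_mul]
  norm_num

lemma tsum_mul_le_l2ENorm_mul (a b : ι → ℝ≥0∞) :
    ∑' i, a i * b i ≤ l2ENorm a * l2ENorm b := by
  let _ : MeasurableSpace ι := ⊤
  simpa [l2ENorm, lintegral_count, ENNReal.rpow_two] using
    ENNReal.lintegral_mul_le_Lp_mul_Lq Measure.count Real.HolderConjugate.two_two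
      (f := a) (g := b) (by fun_prop) (by fun_prop)

end l2ENorm

section Young

variable {G : Type*} [AddCommGroup G]

lemma tsum_mul_sub_comm (a b : G → ℝ≥0∞) (k : G) :
    ∑' j, a j * b (k - j) = ∑' j, b j * a (k - j) := by
  rw [← (Equiv.subLeft k).tsum_eq]
  simp [mul_comm]

lemma l2ENorm_tsum_mul_sub_le (a b : G → ℝ≥0∞) :
    l2ENorm (fun k => ∑' j, a j * b (k - j)) ≤ (∑' j, a j) * l2ENorm b := by
  have sqrt_sq (x : ℝ≥0∞) : (x ^ (1 / 2 : ℝ)) ^ 2 = x := by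
    rw [← ENNReal.rpow_natCast, ← ENNReal.rpow_mul]; norm_num
  -- Cauchy–Schwarz after writing `a j * c = √(a j) * (√(a j) * c)`
  have weighted (k : G) :
      (∑' j, a j * b (k - j)) ^ 2 ≤ (∑' j, a j) * ∑' j, a j * b (k - j) ^ 2 := by
    have h := tsum_mul_le_l2ENorm_mul (fun j => a j ^ (1 / 2 : ℝ))
      (fun j => a j ^ (1 / 2 : ℝ) * b (k - j))
    simp only [← mul_assoc, ← sq, sqrt_sq] at h
    calc (∑' j, a j * b (k - j)) ^ 2
        ≤ (l2ENorm (fun j => a j ^ (1 / 2 : ℝ)) *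
            l2ENorm (fun j => a j ^ (1 / 2 : ℝ) * b (k - j))) ^ 2 := by gcongr
      _ = (∑' j, a j) * ∑' j, a j * b (k - j) ^ 2 := by
          simp only [mul_pow, l2ENorm_sq, sqrt_sq]
  have shift (j : G) : ∑' k, b (k - j) ^ 2 = ∑' l, b l ^ 2 :=
    (Equiv.subRight j).tsum_eq fun l => b l ^ 2
  refine (ENNReal.pow_le_pow_left_iff two_ne_zero).1 ?_
  calc l2ENorm (fun k => ∑' j, a j * b (k - j)) ^ 2
      ≤ ∑' k, (∑' j, a j) * ∑' j, a j * b (k - j) ^ 2 := by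
        rw [l2ENorm_sq]; exact ENNReal.tsum_le_tsum weighted
    _ = (∑' j, a j) * ∑' j, a j * ∑' k, b (k - j) ^ 2 := by
        rw [ENNReal.tsum_mul_left, ENNReal.tsum_comm]; simp only [ENNReal.tsum_mul_left]
    _ = ((∑' j, a j) * l2ENorm b) ^ 2 := by
        simp only [shift]
        rw [ENNReal.tsum_mul_right, mul_pow, l2ENorm_sq, sq, mul_assoc]

end Young

lemma add_rpow_le_two_rpow_mul {a b m s : ℝ} (ha : 0 ≤ a) (hb : 0 < b) (hm : 0 ≤ m)
    (hms : m ≤ s) : (a + b) ^ m ≤ 2 ^ m * (b ^ m + a ^ s * b ^ (m - s)) := by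
  rcases le_total a b with hab | hba
  · calc (a + b) ^ m ≤ (2 * b) ^ m := Real.rpow_le_rpow (by positivity) (by linarith) hm
      _ = 2 ^ m * b ^ m := Real.mul_rpow zero_le_two hb.le
      _ ≤ 2 ^ m * (b ^ m + a ^ s * b ^ (m - s)) := by
        gcongr; exact le_add_of_nonneg_right (by positivity)
  · have ha' : 0 < a := hb.trans_le hba
    calc (a + b) ^ m ≤ (2 * a) ^ m := Real.rpow_le_rpow (by positivity) (by linarith) hm
      _ = 2 ^ m * (a ^ s * a ^ (m - s)) := by
        rw [Real.mul_rpow zero_le_two ha'.le, ← Real.rpow_add ha', add_sub_cancel]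
      _ ≤ 2 ^ m * (a ^ s * b ^ (m - s)) := by
        gcongr 2 ^ m * (a ^ s * ?_)
        exact Real.rpow_le_rpow_of_nonpos hb hba (by linarith)
      _ ≤ 2 ^ m * (b ^ m + a ^ s * b ^ (m - s)) := by
        gcongr; exact le_add_of_nonneg_left (by positivity)

lemma ae_eq_zero_of_forall_integral_boundedContinuous_smul_eq_zero {X E : Type*}
    [TopologicalSpace X] [HasOuterApproxClosed X] [MeasurableSpace X] [BorelSpace X]
    [NormedAddCommGroup E] [NormedSpace ℝ E] [CompleteSpace E] {μ : Measure X} {w : X → E}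
    (hw : Integrable w μ) (h : ∀ c : X →ᵇ ℝ≥0, ∫ x, (c x : ℝ) • w x ∂μ = 0) :
    w =ᵐ[μ] 0 := by
  refine ae_eq_zero_of_forall_setIntegral_isClosed_eq_zero hw fun F hF => ?_
  rw [← integral_indicator hF.measurableSet]
  have lim : Tendsto (fun n => ∫ x, (hF.apprSeq n x : ℝ) • w x ∂μ) atTop
      (𝓝 (∫ x, F.indicator w x ∂μ)) := by
    refine tendsto_integral_of_dominated_convergence (fun x => ‖w x‖) (fun n => ?_) hw.norm
      (fun n => ae_of_all _ fun x => ?_) (ae_of_all _ fun x => ?_)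
    · exact ((NNReal.continuous_coe.comp (hF.apprSeq n).continuous).aestronglyMeasurable).smul
        hw.aestronglyMeasurable
    · rw [norm_smul, NNReal.norm_eq]
      exact mul_le_of_le_one_left (norm_nonneg _) (by exact_mod_cast apprSeq_apply_le_one hF n x)
    · have := (NNReal.continuous_coe.tendsto _).comp (tendsto_pi_nhds.1 (tendsto_apprSeq hF) x)
      by_cases hx : x ∈ F <;> simpa [hx] using this.smul_const (w x)
  simp only [h] at lim
  exact tendsto_nhds_unique lim tendsto_const_nhds

section AddCircle

variable {T : ℝ} [Fact (0 < T)]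

lemma integrable_haarAddCircle_iff {f : AddCircle T → ℂ} :
    Integrable f haarAddCircle ↔ Integrable f volume := by
  rw [volume_eq_smul_haarAddCircle,
    integrable_smul_measure (by simpa using Fact.out) ENNReal.ofReal_ne_top]

lemma integral_mul_eq_zero_of_fourierCoeff_eq_zero {w : AddCircle T → ℂ}
    (hw : Integrable w haarAddCircle) (h0 : fourierCoeff w = 0) (c : C(AddCircle T, ℂ)) :
    ∫ x, c x * w x ∂haarAddCircle = 0 := by
  have hcw (c : C(AddCircle T, ℂ)) : Integrable (fun x => c x * w x) haarAddCircle :=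
    hw.bdd_mul c.continuous.aestronglyMeasurable (ae_of_all _ c.norm_coe_le_norm)
  let Ψ : C(AddCircle T, ℂ) →L[ℂ] ℂ := LinearMap.mkContinuous
    { toFun c := ∫ x, c x * w x ∂haarAddCircle
      map_add' c d := by
        simp only [ContinuousMap.add_apply, add_mul, integral_add (hcw c) (hcw d)]
      map_smul' a c := by
        simp only [ContinuousMap.smul_apply, smul_eq_mul, mul_assoc, integral_const_mul,
          RingHom.id_apply] }
    (∫ x, ‖w x‖ ∂haarAddCircle) fun c => by
      rw [mul_comm, ← integral_const_mul]
      refine (norm_integral_le_integral_norm _).trans (integral_mono (hcw c).norm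
        (hw.norm.const_mul _) fun x => ?_)
      simp only [norm_mul]
      gcongr
      exact c.norm_coe_le_norm x
  have hΨ : Submodule.span ℂ (Set.range fourier) ≤
      LinearMap.ker (Ψ : C(AddCircle T, ℂ) →ₗ[ℂ] ℂ) := by
    refine Submodule.span_le.2 ?_
    rintro _ ⟨n, rfl⟩
    have hn : Ψ (fourier n) = fourierCoeff w (-n) := by simp [Ψ, fourierCoeff]
    simp [hn, h0]
  have hclosure := Submodule.topologicalClosure_minimal _ hΨ Ψ.isClosed_ker
  rw [span_fourier_closure_eq_top] at hclosure
  exact hclosure (Submodule.mem_top (x := c))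

lemma ae_eq_zero_of_fourierCoeff_eq_zero {w : AddCircle T → ℂ}
    (hw : Integrable w haarAddCircle) (h0 : fourierCoeff w = 0) : w =ᵐ[haarAddCircle] 0 :=
  ae_eq_zero_of_forall_integral_boundedContinuous_smul_eq_zero hw fun c => by
    simp only [Complex.real_smul]
    exact integral_mul_eq_zero_of_fourierCoeff_eq_zero hw h0 ⟨fun x => (c x : ℂ), by fun_prop⟩

lemma fourierCoeff_mul_tsum_fourier {f : AddCircle T → ℂ} (hf : Integrable f haarAddCircle)
    {a : ℤ → ℂ} (ha : Summable a) (k : ℤ) :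
    fourierCoeff (fun x => f x * ∑' j, a j * fourier j x) k =
      ∑' j, a j * fourierCoeff f (k - j) := by
  have term (j : ℤ) (x : AddCircle T) :
      fourier (-k) x * (f x * (a j * fourier j x)) = a j * (fourier (-(k - j)) x * f x) := by
    rw [show -(k - j) = -k + j by ring, fourier_add]
    ring
  have hint (j : ℤ) : Integrable (fun x => a j * (fourier (-(k - j)) x * f x)) haarAddCircle :=
    (hf.fourier_smul _).const_mul _
  have hsum : Summable fun j => ∫ x, ‖a j * (fourier (-(k - j)) x * f x)‖ ∂haarAddCircle := by
    simpa only [norm_mul, fourier_apply, Circle.norm_coe, one_mul, integral_const_mul] using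
      ha.norm.mul_right (∫ x, ‖f x‖ ∂haarAddCircle)
  simp only [fourierCoeff, smul_eq_mul, ← tsum_mul_left, term]
  rw [← integral_tsum_of_summable_integral_norm hint hsum]
  simp only [integral_const_mul]

lemma fourierCoeff_tsum_fourier {a : ℤ → ℂ} (ha : Summable a) :
    fourierCoeff (fun x : AddCircle T => ∑' j, a j * fourier j x) = a := by
  ext k
  have h := fourierCoeff_mul_tsum_fourier (integrable_const (μ := haarAddCircle (T := T)) 1) ha k
  have one : fourierCoeff (fun _ : AddCircle T => (1 : ℂ)) = Pi.single 0 1 := by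
    rw [← fourierCoeff_fourier (T := T) 0]
    congr with x
    exact fourier_zero.symm
  simp only [one_mul, one] at h
  rw [h, tsum_eq_single k fun j hj => by simp [sub_eq_zero, Ne.symm hj]]
  simp

lemma ae_eq_tsum_fourier {g : AddCircle T → ℂ} (hg : Integrable g haarAddCircle)
    (hsum : Summable (fourierCoeff g)) :
    g =ᵐ[haarAddCircle] fun x => ∑' j, fourierCoeff g j * fourier j x := by
  set h : AddCircle T → ℂ := fun x => ∑' j, fourierCoeff g j * fourier j x
  have hh : Integrable h haarAddCircle := by
    refine Continuous.integrable_of_hasCompactSupport ?_ (.of_compactSpace h)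
    refine continuous_tsum (fun j => by fun_prop) hsum.norm fun j x => ?_
    simp [fourier_apply, Circle.norm_coe]
  have h0 : fourierCoeff (g - h) = 0 := by
    ext n
    simp only [fourierCoeff, Pi.sub_apply, smul_sub]
    rw [integral_sub (hg.fourier_smul _) (hh.fourier_smul _)]
    exact sub_eq_zero.2 (congrFun (fourierCoeff_tsum_fourier hsum).symm n)
  filter_upwards [ae_eq_zero_of_fourierCoeff_eq_zero (hg.sub hh) h0] with x hx
  exact sub_eq_zero.1 hx

lemma fourierCoeff_mul_eq_tsum {f g : AddCircle T → ℂ} (hf : Integrable f haarAddCircle)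
    (hg : Integrable g haarAddCircle) (hsum : Summable (fourierCoeff g)) (k : ℤ) :
    fourierCoeff (fun x => f x * g x) k = ∑' j, fourierCoeff g j * fourierCoeff f (k - j) := by
  rw [fourierCoeff_congr_ae
    ((ae_eq_tsum_fourier hg hsum).mono fun x hx => congrArg (f x * ·) hx)]
  exact fourierCoeff_mul_tsum_fourier hf hsum k

def sobolevCoeff (s : ℝ) (f : AddCircle T → ℂ) (k : ℤ) : ℝ≥0∞ :=
  ENNReal.ofReal (|(k : ℝ)| ^ s) * ‖fourierCoeff f k‖ₑ

lemma tsum_sobolevCoeff_le {u : AddCircle T → ℂ} (hu : fourierCoeff u 0 = 0) (r t : ℝ) :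
    ∑' k, sobolevCoeff r u k ≤ l2ENorm (fun k : ℤ => ENNReal.ofReal (|(k : ℝ)| ^ (-t))) *
      l2ENorm (sobolevCoeff (r + t) u) := by
  refine le_trans (ENNReal.tsum_le_tsum fun k => le_of_eq ?_) (tsum_mul_le_l2ENorm_mul _ _)
  rcases eq_or_ne k 0 with rfl | hk
  · simp [sobolevCoeff, hu]
  have hk' : 0 < |(k : ℝ)| := by positivity
  rw [sobolevCoeff, sobolevCoeff, ← mul_assoc, ← ENNReal.ofReal_mul (by positivity),
    ← Real.rpow_add hk', neg_add_cancel_comm_assoc]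

lemma l2ENorm_rpow_neg_ne_top {s : ℝ} (hs : 1 / 2 < s) :
    l2ENorm (fun k : ℤ => ENNReal.ofReal (|(k : ℝ)| ^ (-s))) ≠ ⊤ := by
  have hsq (k : ℤ) :
      ENNReal.ofReal (|(k : ℝ)| ^ (-s)) ^ 2 = ENNReal.ofReal (|(k : ℝ)| ^ (-(2 * s))) := by
    rw [← ENNReal.ofReal_pow (by positivity), ← Real.rpow_mul_natCast (abs_nonneg _)]
    ring_nf
  rw [l2ENorm, funext hsq, ← ENNReal.ofReal_tsum_of_nonneg (fun k => by positivity)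
    (Real.summable_abs_int_rpow (by linarith))]
  exact ENNReal.rpow_ne_top_of_nonneg (by norm_num) ENNReal.ofReal_ne_top

lemma summable_fourierCoeff_of_l2ENorm_ne_top {u : AddCircle T → ℂ} (hu : fourierCoeff u 0 = 0)
    {s : ℝ} (hs : 1 / 2 < s) (h : l2ENorm (sobolevCoeff s u) ≠ ⊤) :
    Summable (fourierCoeff u) := by
  have hl1 := tsum_sobolevCoeff_le hu 0 s
  simp only [sobolevCoeff, Real.rpow_zero, ENNReal.ofReal_one, one_mul, zero_add] at hl1
  refine Summable.of_norm (tsum_enorm_ne_top_iff_summable_norm.1 (ne_top_of_le_ne_top ?_ hl1))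
  exact ENNReal.mul_ne_top (l2ENorm_rpow_neg_ne_top hs) h

lemma ofReal_rpow_mul_enorm_fourierCoeff_le {f g : AddCircle T → ℂ} (hf0 : fourierCoeff f 0 = 0)
    {m s : ℝ} (hm : 0 ≤ m) (hms : m ≤ s) (j l : ℤ) :
    ENNReal.ofReal (|((j + l : ℤ) : ℝ)| ^ m) * (‖fourierCoeff g j‖ₑ * ‖fourierCoeff f l‖ₑ) ≤
      ENNReal.ofReal (2 ^ m) * (sobolevCoeff 0 g j * sobolevCoeff m f l +
        sobolevCoeff s g j * sobolevCoeff (m - s) f l) := by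
  rcases eq_or_ne l 0 with rfl | hl
  · simp [hf0]
  have hjl : |((j + l : ℤ) : ℝ)| ^ m ≤
      2 ^ m * (|(l : ℝ)| ^ m + |(j : ℝ)| ^ s * |(l : ℝ)| ^ (m - s)) :=
    (Real.rpow_le_rpow (abs_nonneg _) (by push_cast; exact abs_add_le _ _) hm).trans
      (add_rpow_le_two_rpow_mul (abs_nonneg _) (by positivity) hm hms)
  calc ENNReal.ofReal (|((j + l : ℤ) : ℝ)| ^ m) * (‖fourierCoeff g j‖ₑ * ‖fourierCoeff f l‖ₑ)
      ≤ ENNReal.ofReal (2 ^ m * (|(l : ℝ)| ^ m + |(j : ℝ)| ^ s * |(l : ℝ)| ^ (m - s))) *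
          (‖fourierCoeff g j‖ₑ * ‖fourierCoeff f l‖ₑ) := by gcongr
    _ = _ := by
        simp only [sobolevCoeff, Real.rpow_zero, ENNReal.ofReal_one, one_mul]
        rw [ENNReal.ofReal_mul (by positivity), ENNReal.ofReal_add (by positivity) (by positivity),
          ENNReal.ofReal_mul (by positivity)]
        ring

lemma sobolevCoeff_mul_le {f g : AddCircle T → ℂ} (hf : Integrable f haarAddCircle)
    (hg : Integrable g haarAddCircle) (hsum : Summable (fourierCoeff g))
    (hf0 : fourierCoeff f 0 = 0) {m s : ℝ} (hm : 0 ≤ m) (hms : m ≤ s) (k : ℤ) :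
    sobolevCoeff m (fun x => f x * g x) k ≤ ENNReal.ofReal (2 ^ m) *
      (∑' j, sobolevCoeff 0 g j * sobolevCoeff m f (k - j) +
        ∑' j, sobolevCoeff s g j * sobolevCoeff (m - s) f (k - j)) := by
  calc sobolevCoeff m (fun x => f x * g x) k
      = ENNReal.ofReal (|(k : ℝ)| ^ m) * ‖∑' j, fourierCoeff g j * fourierCoeff f (k - j)‖ₑ := by
        rw [sobolevCoeff, fourierCoeff_mul_eq_tsum hf hg hsum]
    _ ≤ ∑' j, ENNReal.ofReal (|(k : ℝ)| ^ m) *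
          (‖fourierCoeff g j‖ₑ * ‖fourierCoeff f (k - j)‖ₑ) := by
        rw [ENNReal.tsum_mul_left]
        gcongr
        simpa only [enorm_mul] using
          enorm_tsum_le_tsum_enorm (f := fun j => fourierCoeff g j * fourierCoeff f (k - j))
    _ ≤ _ := by
        refine (ENNReal.tsum_le_tsum fun j => ?_).trans_eq
          (by rw [ENNReal.tsum_mul_left, ENNReal.tsum_add])
        simpa using ofReal_rpow_mul_enorm_fourierCoeff_le (g := g) hf0 hm hms j (k - j)

lemma l2ENorm_sobolevCoeff_mul_le {f g : AddCircle T → ℂ} (hf : Integrable f haarAddCircle)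
    (hg : Integrable g haarAddCircle) (hsum : Summable (fourierCoeff g))
    (hf0 : fourierCoeff f 0 = 0) (hg0 : fourierCoeff g 0 = 0) {m s : ℝ} (hm : 0 ≤ m)
    (hms : m ≤ s) :
    l2ENorm (sobolevCoeff m (fun x => f x * g x)) ≤
      ENNReal.ofReal (2 ^ m) * (2 * l2ENorm (fun k : ℤ => ENNReal.ofReal (|(k : ℝ)| ^ (-s)))) *
        l2ENorm (sobolevCoeff m f) * l2ENorm (sobolevCoeff s g) := by
  set K := l2ENorm (fun k : ℤ => ENNReal.ofReal (|(k : ℝ)| ^ (-s)))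
  have hG : ∑' j, sobolevCoeff 0 g j ≤ K * l2ENorm (sobolevCoeff s g) := by
    simpa only [zero_add] using tsum_sobolevCoeff_le hg0 0 s
  have hB : ∑' l, sobolevCoeff (m - s) f l ≤ K * l2ENorm (sobolevCoeff m f) := by
    simpa only [sub_add_cancel] using tsum_sobolevCoeff_le hf0 (m - s) s
  calc l2ENorm (sobolevCoeff m (fun x => f x * g x))
      ≤ l2ENorm (fun k => ENNReal.ofReal (2 ^ m) *
          ((fun k => ∑' j, sobolevCoeff 0 g j * sobolevCoeff m f (k - j)) +
            (fun k => ∑' j, sobolevCoeff (m - s) f j * sobolevCoeff s g (k - j))) k) := by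
        refine l2ENorm_mono fun k => ?_
        simpa only [Pi.add_apply, tsum_mul_sub_comm (sobolevCoeff s g)] using
          sobolevCoeff_mul_le hf hg hsum hf0 hm hms k
    _ ≤ ENNReal.ofReal (2 ^ m) * ((∑' j, sobolevCoeff 0 g j) * l2ENorm (sobolevCoeff m f) +
          (∑' j, sobolevCoeff (m - s) f j) * l2ENorm (sobolevCoeff s g)) := by
        rw [l2ENorm_const_mul]
        gcongr
        exact (l2ENorm_add_le _ _).trans
          (add_le_add (l2ENorm_tsum_mul_sub_le _ _) (l2ENorm_tsum_mul_sub_le _ _))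
    _ ≤ ENNReal.ofReal (2 ^ m) * (K * l2ENorm (sobolevCoeff s g) * l2ENorm (sobolevCoeff m f) +
          K * l2ENorm (sobolevCoeff m f) * l2ENorm (sobolevCoeff s g)) := by
        gcongr
    _ = _ := by ring

end AddCircle

lemma hSobNorm_eq_l2ENorm (s : ℝ) (f : AddCircle (2 * Real.pi) → ℂ) :
    hSobNorm s f = l2ENorm (sobolevCoeff s f) := by
  unfold hSobNorm l2ENorm sobolevCoeff
  congr 1
  refine tsum_congr fun k => ?_
  rw [mul_pow, ← ofReal_norm, ← ENNReal.ofReal_pow (by positivity),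
    ← ENNReal.ofReal_pow (norm_nonneg _), ← ENNReal.ofReal_mul (by positivity),
    ← Real.rpow_mul_natCast (abs_nonneg _)]
  ring_nf

/-- For `s > 1/2` and `m ∈ [0, s]` there is `c > 0` such that for all periodic functions
`f, g` with zero mean and finite norms `‖f‖_{Ḣ^m}`, `‖g‖_{Ḣ^s}`, the product `fg` satisfies
`‖fg‖_{Ḣ^m} ≤ c ‖f‖_{Ḣ^m} ‖g‖_{Ḣ^s}`. -/
theorem stmt6 (s m : ℝ) (hs : 1 / 2 < s) (hm0 : 0 ≤ m) (hms : m ≤ s) :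
    ∃ c : ℝ, 0 < c ∧
      ∀ f g : AddCircle (2 * Real.pi) → ℂ,
        Integrable f volume → Integrable g volume →
        fourierCoeff f 0 = 0 → fourierCoeff g 0 = 0 →
        hSobNorm m f < ⊤ → hSobNorm s g < ⊤ →
        hSobNorm m (fun x => f x * g x) ≤ ENNReal.ofReal c * hSobNorm m f * hSobNorm s g := by
  set K := l2ENorm (fun k : ℤ => ENNReal.ofReal (|(k : ℝ)| ^ (-s)))
  have hK : K ≠ ⊤ := l2ENorm_rpow_neg_ne_top hs
  have hK_pos : 0 < K.toReal := by
    have hK1 : 1 ≤ K := by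
      simpa using apply_le_l2ENorm (fun k : ℤ => ENNReal.ofReal (|(k : ℝ)| ^ (-s))) 1
    exact ENNReal.toReal_pos (zero_lt_one.trans_le hK1).ne' hK
  refine ⟨2 ^ m * (2 * K.toReal), by positivity, fun f g hf hg hf0 hg0 _ hg_fin => ?_⟩
  rw [← integrable_haarAddCircle_iff] at hf hg
  simp only [hSobNorm_eq_l2ENorm] at hg_fin ⊢
  have hsum := summable_fourierCoeff_of_l2ENorm_ne_top hg0 hs hg_fin.ne
  refine (l2ENorm_sobolevCoeff_mul_le hf hg hsum hf0 hg0 hm0 hms).trans_eq ?_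
  rw [ENNReal.ofReal_mul (by positivity), ENNReal.ofReal_mul zero_le_two,
    ENNReal.ofReal_toReal hK, ENNReal.ofReal_ofNat]

end
end

section
/- Let ν > 0 and K > 0 be real numbers, and let x₁(0), x₂(0) ∈ ℂ satisfy Im x₁(0) < 0 and Im x₂(0) < 0. Then there do not exist continuous functions x₁, x₂ : [0, ∞) → ℂ with the given initial values such that for all t ≥ 0: x₁(t) + x₂(t) = x₁(0) + x₂(0), (x₁(t) − x₂(t))² = (x₁(0) − x₂(0))² − (5/3) K ν t, and Im x₁(t) < 0 and Im x₂(t) < 0. Equivalently, for any continuous x₁, x₂ satisfying the two identities on [0, ∞), there exists a finite time at which Im x₁ = 0 or Im x₂ = 0. -/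
/-! Since `x₁ + x₂` is conserved, `Im x₁ + Im x₂ = s < 0` for all time, and while both poles stay
in the lower half-plane `|Im (x₁ - x₂)| ≤ |s|`. On the other hand `Re ((x₁ - x₂)²)` decreases
linearly to `-∞`, which forces `(Im (x₁ - x₂))² ≥ -Re ((x₁ - x₂)²)` to grow without bound. So some
pole must leave the open lower half-plane, and by continuity it crosses the real axis. -/

open Filter

theorem Complex.neg_re_sq_le_im_sq (z : ℂ) : -(z ^ 2).re ≤ z.im ^ 2 := by
  rw [sq, Complex.mul_re]
  nlinarith [sq_nonneg z.re]

theorem sq_sub_le_sq_add_of_mul_nonneg {R : Type*} [CommRing R] [PartialOrder R]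
    [IsOrderedRing R] {a b : R} (hab : 0 ≤ a * b) : (a - b) ^ 2 ≤ (a + b) ^ 2 := by
  have : (a + b) ^ 2 = (a - b) ^ 2 + 4 * (a * b) := by ring
  rw [this]
  exact le_add_of_nonneg_right (mul_nonneg (by norm_num) hab)

theorem IsPreconnected.forall_neg_of_forall_ne_zero {X : Type*} [TopologicalSpace X] {s : Set X}
    (hs : IsPreconnected s) {f : X → ℝ} (hf : ContinuousOn f s) {a : X} (ha : a ∈ s)
    (hfa : f a < 0) (hne : ∀ x ∈ s, f x ≠ 0) : ∀ x ∈ s, f x < 0 := by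
  intro x hx
  by_contra! hfx
  obtain ⟨y, hy, hfy⟩ := hs.intermediate_value ha hx hf ⟨hfa.le, hfx⟩
  exact hne y hy hfy

/-- Blow-up mechanism for Schochet's pole-dynamics solution (`a = 0`, `σ = 2`): if
`ν, K > 0` and `x₁, x₂ : [0,∞) → ℂ` are continuous with `Im x₁(0) < 0`, `Im x₂(0) < 0`,
and satisfy `x₁(t) + x₂(t) = x₁(0) + x₂(0)` and
`(x₁(t) − x₂(t))² = (x₁(0) − x₂(0))² − (5/3) K ν t` for all `t ≥ 0`, then there is a
finite time `t ≥ 0` at which `Im x₁ = 0` or `Im x₂ = 0` (equivalently, the trajectories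
cannot remain in the open lower half-plane for all time). -/
theorem stmt12 (ν K : ℝ) (hν : 0 < ν) (hK : 0 < K) (x₁ x₂ : ℝ → ℂ)
    (hc₁ : ContinuousOn x₁ (Set.Ici 0)) (hc₂ : ContinuousOn x₂ (Set.Ici 0))
    (h₁ : (x₁ 0).im < 0) (h₂ : (x₂ 0).im < 0)
    (hsum : ∀ t : ℝ, 0 ≤ t → x₁ t + x₂ t = x₁ 0 + x₂ 0)
    (hdiff : ∀ t : ℝ, 0 ≤ t →
      (x₁ t - x₂ t) ^ 2 =
        (x₁ 0 - x₂ 0) ^ 2 - ((5 : ℂ) / 3) * (K : ℂ) * (ν : ℂ) * (t : ℂ)) :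
    ∃ t : ℝ, 0 ≤ t ∧ ((x₁ t).im = 0 ∨ (x₂ t).im = 0) := by
  by_contra! hne
  have him₁ : ∀ t ∈ Set.Ici (0 : ℝ), (x₁ t).im < 0 :=
    isPreconnected_Ici.forall_neg_of_forall_ne_zero (Complex.continuous_im.comp_continuousOn hc₁)
      Set.self_mem_Ici h₁ fun t ht => (hne t ht).1
  have him₂ : ∀ t ∈ Set.Ici (0 : ℝ), (x₂ t).im < 0 :=
    isPreconnected_Ici.forall_neg_of_forall_ne_zero (Complex.continuous_im.comp_continuousOn hc₂)
      Set.self_mem_Ici h₂ fun t ht => (hne t ht).2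
  set c : ℝ := 5 / 3 * K * ν
  set r : ℝ := ((x₁ 0 - x₂ 0) ^ 2).re
  set s : ℝ := (x₁ 0 + x₂ 0).im
  have hbound : ∀ t, 0 ≤ t → c * t - r ≤ s ^ 2 := fun t ht =>
    calc c * t - r = -((x₁ t - x₂ t) ^ 2).re := by
          rw [hdiff t ht]
          simp [c, r]
      _ ≤ ((x₁ t).im - (x₂ t).im) ^ 2 := by
          simpa using Complex.neg_re_sq_le_im_sq (x₁ t - x₂ t)
      _ ≤ ((x₁ t).im + (x₂ t).im) ^ 2 := sq_sub_le_sq_add_of_mul_nonneg <|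
          mul_nonneg_of_nonpos_of_nonpos (him₁ t ht).le (him₂ t ht).le
      _ = s ^ 2 := by rw [← Complex.add_im, hsum t ht]
  have hc : 0 < c := by positivity
  obtain ⟨t, ht, hct⟩ := ((eventually_ge_atTop 0).and
    ((tendsto_id.const_mul_atTop hc).eventually_gt_atTop (r + s ^ 2))).exists
  rw [id] at hct
  linarith [hbound t ht]
end

section
/- Let ν > 0 and let ω₋₁(0), v_c(0) ∈ ℂ with ω₋₁(0) ≠ ν(1 + v_c(0)), and let t₀ ∈ ℂ satisfy e^(ν t₀) = 1 − ν(1 + v_c(0))/ω₋₁(0). Then on any interval [0, T) on which 1 − e^(−ν(t + t₀)) ≠ 0 and 1 + v_c(t) ≠ 0, the functions ω₋₁(t) = ω₋₁(0) e^(−νt) ((1 − e^(−ν t₀))/(1 − e^(−ν(t + t₀))))² and v_c(t) = (ω₋₁(0)/ν) (1 − e^(−ν t₀))(1 − e^(−νt))/(1 − e^(−ν(t + t₀))) + v_c(0) satisfy the system dω₋₁/dt = −ν ω₋₁ + 2 ω₋₁²/(1 + v_c), dv_c/dt = ω₋₁, with the given initial values. -/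
/-!
With `E = e^{-νt}` and `E₀ = e^{-νt₀}`, both `ω₋₁` and `v_c` are rational functions of `E` with the
single denominator `1 - E₀ E`, and `E' = -νE`. The condition on `t₀` is equivalent to
`ν (1 + v_c(0)) E₀ = ω₋₁(0) (E₀ - 1)`, which collapses `1 + v_c` to
`-ω₋₁(0) (1 - E₀)² / (ν E₀ (1 - E₀ E))`. Hence `ω₋₁² / (1 + v_c) = -ν E₀ E ω₋₁ / (1 - E₀ E)`, and
both equations of the system become identities between rational functions of `E`.
-/

noncomputable section

/-- `ω₋₁(t) = ω₋₁(0) e^(−νt) ((1 − e^(−ν t₀))/(1 − e^(−ν(t + t₀))))²`. -/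
def omPer (ν : ℝ) (w0 t₀ : ℂ) (t : ℝ) : ℂ :=
  w0 * Complex.exp (-(ν : ℂ) * (t : ℂ)) *
    ((1 - Complex.exp (-(ν : ℂ) * t₀)) / (1 - Complex.exp (-(ν : ℂ) * ((t : ℂ) + t₀)))) ^ 2

/-- `v_c(t) = (ω₋₁(0)/ν)(1 − e^(−ν t₀))(1 − e^(−νt))/(1 − e^(−ν(t + t₀))) + v_c(0)`. -/
def vcPer (ν : ℝ) (w0 v0 t₀ : ℂ) (t : ℝ) : ℂ :=
  w0 / (ν : ℂ) * (1 - Complex.exp (-(ν : ℂ) * t₀)) * (1 - Complex.exp (-(ν : ℂ) * (t : ℂ))) /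
    (1 - Complex.exp (-(ν : ℂ) * ((t : ℂ) + t₀))) + v0

open Complex

section ExpRational

variable (ν c : ℂ) (t : ℝ)

theorem hasDerivAt_cexp_neg_mul :
    HasDerivAt (fun s : ℝ => cexp (-ν * s)) (-ν * cexp (-ν * t)) t := by
  simpa [mul_comm] using ((hasDerivAt_id (t : ℂ)).const_mul (-ν)).cexp.comp_ofReal

variable {ν c t}

theorem hasDerivAt_one_sub_cexp_div (h : 1 - c * cexp (-ν * t) ≠ 0) :
    HasDerivAt (fun s : ℝ => (1 - cexp (-ν * s)) / (1 - c * cexp (-ν * s)))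
      (ν * (1 - c) * cexp (-ν * t) / (1 - c * cexp (-ν * t)) ^ 2) t := by
  have hE := hasDerivAt_cexp_neg_mul ν t
  refine ((hE.const_sub 1).div ((hE.const_mul c).const_sub 1) h).congr_deriv ?_
  ring

theorem hasDerivAt_cexp_div_sq (h : 1 - c * cexp (-ν * t) ≠ 0) :
    HasDerivAt (fun s : ℝ => cexp (-ν * s) / (1 - c * cexp (-ν * s)) ^ 2)
      (-ν * cexp (-ν * t) * (1 + c * cexp (-ν * t)) / (1 - c * cexp (-ν * t)) ^ 3) t := by
  have hE := hasDerivAt_cexp_neg_mul ν t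
  refine (hE.div (((hE.const_mul c).const_sub 1).fun_pow 2) (pow_ne_zero 2 h)).congr_deriv ?_
  rw [div_eq_div_iff (pow_ne_zero 2 (pow_ne_zero 2 h)) (pow_ne_zero 3 h)]
  push_cast
  ring

end ExpRational

theorem cexp_neg_mul_add (ν a b : ℂ) : cexp (-ν * (a + b)) = cexp (-ν * b) * cexp (-ν * a) := by
  rw [← Complex.exp_add]
  ring_nf

section PoleDynamics

variable {ν : ℝ} {w0 v0 t₀ : ℂ}

theorem omPer_eq : omPer ν w0 t₀ = fun t : ℝ =>
    w0 * (1 - cexp (-ν * t₀)) ^ 2 * (cexp (-ν * t) / (1 - cexp (-ν * t₀) * cexp (-ν * t)) ^ 2) := by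
  funext t
  rw [omPer, cexp_neg_mul_add, div_pow]
  ring

theorem vcPer_eq : vcPer ν w0 v0 t₀ = fun t : ℝ =>
    w0 / ν * (1 - cexp (-ν * t₀)) *
      ((1 - cexp (-ν * t)) / (1 - cexp (-ν * t₀) * cexp (-ν * t))) + v0 := by
  funext t
  rw [vcPer, cexp_neg_mul_add]
  ring

theorem omPer_zero (h : 1 - cexp (-ν * t₀) ≠ 0) : omPer ν w0 t₀ 0 = w0 := by
  simp only [omPer, Complex.ofReal_zero, mul_zero, Complex.exp_zero, zero_add, div_self h]
  ring

theorem vcPer_zero : vcPer ν w0 v0 t₀ 0 = v0 := by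
  simp [vcPer]

theorem mul_one_add_mul_cexp_eq_of_cexp_eq (hE₀ : 1 - cexp (-ν * t₀) ≠ 0)
    (ht₀ : cexp (ν * t₀) = 1 - ν * (1 + v0) / w0) :
    ν * (1 + v0) * cexp (-ν * t₀) = w0 * (cexp (-ν * t₀) - 1) := by
  have hprod : cexp (ν * t₀) * cexp (-ν * t₀) = 1 := by
    rw [← Complex.exp_add, neg_mul, add_neg_cancel, Complex.exp_zero]
  have hw0 : w0 ≠ 0 := by
    rintro rfl
    rw [div_zero, sub_zero] at ht₀
    rw [ht₀, one_mul] at hprod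
    exact hE₀ (sub_eq_zero.2 hprod.symm)
  rw [ht₀] at hprod
  set E₀ := cexp (-ν * t₀)
  field_simp at hprod
  linear_combination -hprod

theorem one_add_vcPer_eq (hν : (ν : ℂ) ≠ 0)
    (hv0 : ν * (1 + v0) * cexp (-ν * t₀) = w0 * (cexp (-ν * t₀) - 1)) {t : ℝ}
    (hD : 1 - cexp (-ν * t₀) * cexp (-ν * t) ≠ 0) :
    1 + vcPer ν w0 v0 t₀ t =
      -(w0 * (1 - cexp (-ν * t₀)) ^ 2) / (ν * cexp (-ν * t₀) * (1 - cexp (-ν * t₀) * cexp (-ν * t))) := by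
  rw [vcPer_eq]
  beta_reduce
  set E₀ := cexp (-ν * t₀)
  set E := cexp (-ν * t)
  have hE₀ : E₀ ≠ 0 := Complex.exp_ne_zero _
  field_simp
  linear_combination (1 - E₀ * E) * hv0

theorem hasDerivAt_vcPer (hν : (ν : ℂ) ≠ 0) {t : ℝ}
    (hD : 1 - cexp (-ν * t₀) * cexp (-ν * t) ≠ 0) :
    HasDerivAt (vcPer ν w0 v0 t₀) (omPer ν w0 t₀ t) t := by
  rw [vcPer_eq, omPer_eq]
  refine (((hasDerivAt_one_sub_cexp_div hD).const_mul _).add_const v0).congr_deriv ?_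
  field_simp

theorem omPer_sq_div_one_add_vcPer (hν : (ν : ℂ) ≠ 0)
    (hv0 : ν * (1 + v0) * cexp (-ν * t₀) = w0 * (cexp (-ν * t₀) - 1)) {t : ℝ}
    (hD : 1 - cexp (-ν * t₀) * cexp (-ν * t) ≠ 0) :
    omPer ν w0 t₀ t ^ 2 / (1 + vcPer ν w0 v0 t₀ t) =
      -ν * cexp (-ν * t₀) * cexp (-ν * t) * omPer ν w0 t₀ t / (1 - cexp (-ν * t₀) * cexp (-ν * t)) := by
  rcases eq_or_ne w0 0 with rfl | hw0
  · simp [omPer]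
  rw [one_add_vcPer_eq hν hv0 hD, omPer_eq]
  beta_reduce
  field_simp

theorem hasDerivAt_omPer (hν : (ν : ℂ) ≠ 0)
    (hv0 : ν * (1 + v0) * cexp (-ν * t₀) = w0 * (cexp (-ν * t₀) - 1)) {t : ℝ}
    (hD : 1 - cexp (-ν * t₀) * cexp (-ν * t) ≠ 0) :
    HasDerivAt (omPer ν w0 t₀)
      (-ν * omPer ν w0 t₀ t + 2 * omPer ν w0 t₀ t ^ 2 / (1 + vcPer ν w0 v0 t₀ t)) t := by
  rw [mul_div_assoc, omPer_sq_div_one_add_vcPer hν hv0 hD, omPer_eq]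
  refine ((hasDerivAt_cexp_div_sq hD).const_mul _).congr_deriv ?_
  field_simp
  ring

end PoleDynamics

theorem stmt18_general (ν : ℝ) (hν : 0 < ν) (w0 v0 t₀ : ℂ)
    (ht₀ : Complex.exp ((ν : ℂ) * t₀) = 1 - (ν : ℂ) * (1 + v0) / w0)
    (T : ℝ) (hT : 0 < T)
    (hden : ∀ t ∈ Set.Ico (0 : ℝ) T, 1 - Complex.exp (-(ν : ℂ) * ((t : ℂ) + t₀)) ≠ 0) :
    omPer ν w0 t₀ 0 = w0 ∧
    vcPer ν w0 v0 t₀ 0 = v0 ∧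
    ∀ t ∈ Set.Ico (0 : ℝ) T,
      HasDerivWithinAt (omPer ν w0 t₀)
        (-(ν : ℂ) * omPer ν w0 t₀ t +
          2 * omPer ν w0 t₀ t ^ 2 / (1 + vcPer ν w0 v0 t₀ t)) (Set.Ico (0 : ℝ) T) t ∧
      HasDerivWithinAt (vcPer ν w0 v0 t₀) (omPer ν w0 t₀ t) (Set.Ico (0 : ℝ) T) t := by
  have hν0 : (ν : ℂ) ≠ 0 := ofReal_ne_zero.2 hν.ne'
  have hE₀ : 1 - cexp (-ν * t₀) ≠ 0 := by simpa using hden 0 ⟨le_rfl, hT⟩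
  have hv0 := mul_one_add_mul_cexp_eq_of_cexp_eq hE₀ ht₀
  refine ⟨omPer_zero hE₀, vcPer_zero, fun t ht => ?_⟩
  have hD : 1 - cexp (-ν * t₀) * cexp (-ν * t) ≠ 0 := by
    simpa only [cexp_neg_mul_add] using hden t ht
  exact ⟨(hasDerivAt_omPer hν0 hv0 hD).hasDerivWithinAt,
    (hasDerivAt_vcPer hν0 hD).hasDerivWithinAt⟩

/-- The explicit solution of the pole-dynamics system for the periodic problem with `a = 0`,
`σ = 0`: for `ν > 0`, `ω₋₁(0) ≠ ν(1 + v_c(0))`, and `t₀ ∈ ℂ` with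
`e^(ν t₀) = 1 − ν(1 + v_c(0))/ω₋₁(0)`, on any interval `[0, T)` on which
`1 − e^(−ν(t + t₀)) ≠ 0` and `1 + v_c(t) ≠ 0`, the functions `ω₋₁, v_c` above satisfy
`dω₋₁/dt = −ν ω₋₁ + 2ω₋₁²/(1 + v_c)`, `dv_c/dt = ω₋₁`, with the given initial values. -/
theorem stmt18 (ν : ℝ) (hν : 0 < ν) (w0 v0 t₀ : ℂ)
    (hne : w0 ≠ (ν : ℂ) * (1 + v0))
    (ht₀ : Complex.exp ((ν : ℂ) * t₀) = 1 - (ν : ℂ) * (1 + v0) / w0)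
    (T : ℝ) (hT : 0 < T)
    (hden : ∀ t ∈ Set.Ico (0 : ℝ) T, 1 - Complex.exp (-(ν : ℂ) * ((t : ℂ) + t₀)) ≠ 0)
    (hV : ∀ t ∈ Set.Ico (0 : ℝ) T, 1 + vcPer ν w0 v0 t₀ t ≠ 0) :
    omPer ν w0 t₀ 0 = w0 ∧
    vcPer ν w0 v0 t₀ 0 = v0 ∧
    ∀ t ∈ Set.Ico (0 : ℝ) T,
      HasDerivWithinAt (omPer ν w0 t₀)
        (-(ν : ℂ) * omPer ν w0 t₀ t +
          2 * omPer ν w0 t₀ t ^ 2 / (1 + vcPer ν w0 v0 t₀ t)) (Set.Ico (0 : ℝ) T) t ∧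
      HasDerivWithinAt (vcPer ν w0 v0 t₀) (omPer ν w0 t₀ t) (Set.Ico (0 : ℝ) T) t :=
  stmt18_general ν hν w0 v0 t₀ ht₀ T hT hden

end
end

section
/- Let ν > 0 and let ω₋₁(0) and v_c(0) be real with v_c(0) > 0. Define v_c(t) = [ω₋₁(0)(1 − e^(−νt)) + ν v_c(0)(1 + v_c(0))] / [−ω₋₁(0)(1 − e^(−νt)) + ν(1 + v_c(0))]. Then: (a) if −ν v_c(0)(1 + v_c(0)) < ω₋₁(0) < ν(1 + v_c(0)), then 0 < v_c(t) < ∞ for all t ≥ 0; (c1) if ω₋₁(0) < −ν v_c(0)(1 + v_c(0)), then setting t_c = (1/ν) ln(ω₋₁(0)/(ω₋₁(0) + ν v_c(0)(1 + v_c(0)))) we have t_c > 0, v_c(t) > 0 for 0 ≤ t < t_c, and v_c(t_c) = 0; (c2) if ω₋₁(0) > ν(1 + v_c(0)), then setting t_c = (1/ν) ln(ω₋₁(0)/(ω₋₁(0) − ν(1 + v_c(0)))) we have t_c > 0, v_c(t) is finite and positive for 0 ≤ t < t_c, and v_c(t) → +∞ as t → t_c⁻ (the denominator −ω₋₁(0)(1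 − e^(−νt)) + ν(1 + v_c(0)) vanishes at t = t_c). -/
/-! With `s(t) = 1 - e^{-νt}`, which increases from `0` towards `1` on `t ≥ 0`, both the numerator
`ω₋₁(0) s + ν v_c(0)(1 + v_c(0))` and the denominator `ν(1 + v_c(0)) - ω₋₁(0) s` of `v_c` are affine
in `s`. In case (a) both are positive at `s = 0` and `s = 1`, hence on all of `[0, 1]`. In cases (c1)
and (c2) the numerator, respectively the denominator, is strictly decreasing in `t` and vanishes
exactly at `t_c`, where `e^{-ν t_c}` is the reciprocal of the argument of the logarithm; the other
factor stays positive, and a positive numerator over a denominator decreasing to `0⁺` tends to `+∞`. -/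

noncomputable section

/-- The denominator `−ω₋₁(0)(1 − e^(−νt)) + ν(1 + v_c(0))`. -/
def vcDen (ν w0 v0 t : ℝ) : ℝ := -(w0 * (1 - Real.exp (-(ν * t)))) + ν * (1 + v0)

/-- The pole height
`v_c(t) = [ω₋₁(0)(1 − e^(−νt)) + ν v_c(0)(1 + v_c(0))]/[−ω₋₁(0)(1 − e^(−νt)) + ν(1 + v_c(0))]`
for the periodic pole-dynamics solution with `a = 0`, `σ = 0`. -/
def vcHeight (ν w0 v0 t : ℝ) : ℝ :=
  (w0 * (1 - Real.exp (-(ν * t))) + ν * v0 * (1 + v0)) / vcDen ν w0 v0 t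

open Real Filter Topology Set

lemma affine_pos_of_mem_Icc {a b s : ℝ} (hb : 0 < b) (hab : 0 < a + b) (hs : s ∈ Icc (0 : ℝ) 1) :
    0 < a * s + b := by
  obtain ⟨hs0, hs1⟩ := hs
  nlinarith [mul_nonneg hs0 hab.le, mul_nonneg (sub_nonneg.2 hs1) hb.le]

lemma one_sub_exp_neg_mul_mem_Icc {ν t : ℝ} (hν : 0 ≤ ν) (ht : 0 ≤ t) :
    1 - exp (-(ν * t)) ∈ Icc (0 : ℝ) 1 := by
  have hle : exp (-(ν * t)) ≤ 1 := exp_le_one_iff.2 (by nlinarith)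
  exact ⟨by linarith, by linarith [exp_pos (-(ν * t))]⟩

lemma strictMono_one_sub_exp_neg_mul {ν : ℝ} (hν : 0 < ν) :
    StrictMono fun t : ℝ => 1 - exp (-(ν * t)) := fun _ _ h => by
  simpa using exp_lt_exp.2 (neg_lt_neg (mul_lt_mul_of_pos_left h hν))

lemma exp_neg_mul_one_div_mul_log {ν r : ℝ} (hν : ν ≠ 0) (hr : 0 < r) :
    exp (-(ν * ((1 / ν) * log r))) = r⁻¹ := by
  rw [← mul_assoc, mul_one_div_cancel hν, one_mul, exp_neg, exp_log hr]

lemma one_div_mul_log_pos {ν r : ℝ} (hν : 0 < ν) (hr : 1 < r) : 0 < (1 / ν) * log r :=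
  mul_pos (one_div_pos.2 hν) (log_pos hr)

lemma tendsto_div_nhdsLT_atTop {f g : ℝ → ℝ} {x : ℝ} (hf : ContinuousAt f x) (hfx : 0 < f x)
    (hg : ContinuousAt g x) (hgx : g x = 0) (hg_pos : ∀ y < x, 0 < g y) :
    Tendsto (fun y => f y / g y) (𝓝[<] x) atTop := by
  have hg_lim : Tendsto g (𝓝[<] x) (𝓝[>] 0) := by
    refine tendsto_nhdsWithin_iff.2 ⟨?_, ?_⟩
    · exact hgx ▸ hg.tendsto.mono_left nhdsWithin_le_nhds
    · filter_upwards [self_mem_nhdsWithin] with y hy using hg_pos y hy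
  simpa only [div_eq_mul_inv, Pi.inv_apply] using
    (hf.tendsto.mono_left nhdsWithin_le_nhds).pos_mul_atTop hfx hg_lim.inv_tendsto_nhdsGT_zero

def vcNum (ν w0 v0 t : ℝ) : ℝ := w0 * (1 - exp (-(ν * t))) + ν * v0 * (1 + v0)

section PoleHeight

variable {ν w0 v0 : ℝ}

lemma vcHeight_eq_div (t : ℝ) : vcHeight ν w0 v0 t = vcNum ν w0 v0 t / vcDen ν w0 v0 t := rfl

lemma continuous_vcNum : Continuous (vcNum ν w0 v0) := by
  unfold vcNum; fun_prop

lemma continuous_vcDen : Continuous (vcDen ν w0 v0) := by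
  unfold vcDen; fun_prop

lemma vcNum_pos (hν : 0 ≤ ν) (h0 : 0 < ν * v0 * (1 + v0)) (h1 : 0 < w0 + ν * v0 * (1 + v0))
    {t : ℝ} (ht : 0 ≤ t) : 0 < vcNum ν w0 v0 t :=
  affine_pos_of_mem_Icc h0 h1 (one_sub_exp_neg_mul_mem_Icc hν ht)

lemma vcDen_pos (hν : 0 ≤ ν) (h0 : 0 < ν * (1 + v0)) (h1 : w0 < ν * (1 + v0))
    {t : ℝ} (ht : 0 ≤ t) : 0 < vcDen ν w0 v0 t := by
  have := affine_pos_of_mem_Icc (a := -w0) h0 (by linarith) (one_sub_exp_neg_mul_mem_Icc hν ht)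
  unfold vcDen; linarith

lemma strictAnti_vcNum (hν : 0 < ν) (hw0 : w0 < 0) : StrictAnti (vcNum ν w0 v0) :=
  fun _ _ h => by
    have := strictMono_one_sub_exp_neg_mul hν h
    unfold vcNum; nlinarith

lemma strictAnti_vcDen (hν : 0 < ν) (hw0 : 0 < w0) : StrictAnti (vcDen ν w0 v0) :=
  fun _ _ h => by
    have := strictMono_one_sub_exp_neg_mul hν h
    unfold vcDen; nlinarith

lemma vcNum_eq_zero (hν : ν ≠ 0) (hw0 : w0 ≠ 0) (hr : 0 < w0 / (w0 + ν * v0 * (1 + v0))) :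
    vcNum ν w0 v0 ((1 / ν) * log (w0 / (w0 + ν * v0 * (1 + v0)))) = 0 := by
  rw [vcNum, exp_neg_mul_one_div_mul_log hν hr, inv_div]
  field_simp
  ring

lemma vcDen_eq_zero (hν : ν ≠ 0) (hw0 : w0 ≠ 0) (hr : 0 < w0 / (w0 - ν * (1 + v0))) :
    vcDen ν w0 v0 ((1 / ν) * log (w0 / (w0 - ν * (1 + v0)))) = 0 := by
  rw [vcDen, exp_neg_mul_one_div_mul_log hν hr, inv_div]
  field_simp
  ring

end PoleHeight

/-- Behavior of the pole height `v_c(t)` for `ν > 0`, real data `ω₋₁(0)` and `v_c(0) > 0`: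
(a) if `−ν v_c(0)(1 + v_c(0)) < ω₋₁(0) < ν(1 + v_c(0))`, then `v_c(t)` is finite and positive
for all `t ≥ 0`; (c1) if `ω₋₁(0) < −ν v_c(0)(1 + v_c(0))`, then with
`t_c = (1/ν) ln(ω₋₁(0)/(ω₋₁(0) + ν v_c(0)(1 + v_c(0))))` one has `t_c > 0`, `v_c > 0` on
`[0, t_c)`, and `v_c(t_c) = 0`; (c2) if `ω₋₁(0) > ν(1 + v_c(0))`, then with
`t_c = (1/ν) ln(ω₋₁(0)/(ω₋₁(0) − ν(1 + v_c(0))))` one has `t_c > 0`, `v_c` finite and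
positive on `[0, t_c)`, `v_c(t) → +∞` as `t → t_c⁻`, and the denominator vanishes at `t_c`. -/
theorem stmt19 (ν w0 v0 : ℝ) (hν : 0 < ν) (hv0 : 0 < v0) :
    (-(ν * v0 * (1 + v0)) < w0 → w0 < ν * (1 + v0) →
      ∀ t : ℝ, 0 ≤ t → 0 < vcHeight ν w0 v0 t ∧ vcDen ν w0 v0 t ≠ 0) ∧
    (w0 < -(ν * v0 * (1 + v0)) →
      0 < (1 / ν) * Real.log (w0 / (w0 + ν * v0 * (1 + v0))) ∧
      (∀ t : ℝ, 0 ≤ t → t < (1 / ν) * Real.log (w0 / (w0 + ν * v0 * (1 + v0))) →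
        0 < vcHeight ν w0 v0 t) ∧
      vcHeight ν w0 v0 ((1 / ν) * Real.log (w0 / (w0 + ν * v0 * (1 + v0)))) = 0) ∧
    (ν * (1 + v0) < w0 →
      0 < (1 / ν) * Real.log (w0 / (w0 - ν * (1 + v0))) ∧
      (∀ t : ℝ, 0 ≤ t → t < (1 / ν) * Real.log (w0 / (w0 - ν * (1 + v0))) →
        0 < vcHeight ν w0 v0 t ∧ vcDen ν w0 v0 t ≠ 0) ∧
      Filter.Tendsto (vcHeight ν w0 v0)
        (nhdsWithin ((1 / ν) * Real.log (w0 / (w0 - ν * (1 + v0))))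
          (Set.Iio ((1 / ν) * Real.log (w0 / (w0 - ν * (1 + v0))))))
        Filter.atTop ∧
      vcDen ν w0 v0 ((1 / ν) * Real.log (w0 / (w0 - ν * (1 + v0)))) = 0) := by
  have hc : 0 < ν * v0 * (1 + v0) := by positivity
  have hd : 0 < ν * (1 + v0) := by positivity
  refine ⟨fun h1 h2 t ht => ?_, fun h => ?_, fun h => ?_⟩
  · have hD := vcDen_pos hν.le hd h2 ht
    exact ⟨div_pos (vcNum_pos hν.le hc (by linarith) ht) hD, hD.ne'⟩
  · have hr : 1 < w0 / (w0 + ν * v0 * (1 + v0)) := by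
      rw [lt_div_iff_of_neg (by linarith)]; linarith
    have hN := vcNum_eq_zero hν.ne' (by linarith) (zero_lt_one.trans hr)
    refine ⟨one_div_mul_log_pos hν hr, fun t ht htc => ?_, by rw [vcHeight_eq_div, hN, zero_div]⟩
    have hN_pos : 0 < vcNum ν w0 v0 t := hN ▸ strictAnti_vcNum hν (by linarith) htc
    exact div_pos hN_pos (vcDen_pos hν.le hd (by linarith) ht)
  · have hr : 1 < w0 / (w0 - ν * (1 + v0)) := by
      rw [lt_div_iff₀ (by linarith)]; linarith
    have hD := vcDen_eq_zero hν.ne' (by linarith) (zero_lt_one.trans hr)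
    have hD_pos : ∀ t < (1 / ν) * log (w0 / (w0 - ν * (1 + v0))), 0 < vcDen ν w0 v0 t :=
      fun t htc => hD ▸ strictAnti_vcDen hν (by linarith) htc
    refine ⟨one_div_mul_log_pos hν hr, fun t ht htc => ?_, ?_, hD⟩
    · exact ⟨div_pos (vcNum_pos hν.le hc (by linarith) ht) (hD_pos t htc), (hD_pos t htc).ne'⟩
    · exact tendsto_div_nhdsLT_atTop continuous_vcNum.continuousAt
        (vcNum_pos hν.le hc (by linarith) (one_div_mul_log_pos hν hr).le)
        continuous_vcDen.continuousAt hD hD_pos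

end
end
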